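/- arXiv:1505.08094 — 11 statements merged into one kernel-verified Lean document; each statement's English description precedes it below -/
import Mathlib

section
/- Let G be a finite non-cyclic abelian group. Then the following are equivalent: (a) G is isomorphic to ℤ/pℤ × ℤ/pℤ for some prime p; (b) the intersection graph of subgroups I(G) is triangle-free (has no 3-clique); (c) I(G) is acyclic (contains no cycle); (d) I(G) is bipartite (2-colorable). -/
/-!
Triangle-freeness forces every nontrivial proper subgroup to be both an atom and a coatom of
the subgroup lattice: if `⊥ < A < E < ⊤` and `x ∉ E`, then `C = ⟨x⟩` is proper (`G` is not
cyclic), and the two would-be triangles `{A, E, C ⊔ A}` and `{C ⊓ E, C, E}` force `C ⊔ A = ⊤`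
and `C ⊓ E = ⊥`; the modular law then gives `E = A ⊔ (C ⊓ E) = A`. Two distinct cyclic
subgroups are then complementary atoms, of prime orders that must coincide since `G` is not
cyclic. Conversely, in `ℤ/p × ℤ/p` every nontrivial proper subgroup has order `p`, so distinct ones
meet trivially and the intersection graph has no edges at all.
-/

open SimpleGraph

/-- The intersection graph of subgroups of a group `G`: vertices are the
nontrivial proper subgroups of `G`, and two distinct vertices are adjacent
iff the corresponding subgroups have nontrivial intersection. -/
def interGraph (G : Type*) [Group G] :
    SimpleGraph {H : Subgroup G // H ≠ ⊥ ∧ H ≠ ⊤} where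
  Adj H K := H ≠ K ∧ H.1 ⊓ K.1 ≠ ⊥
  symm := by
    constructor
    rintro H K ⟨hne, hint⟩
    exact ⟨hne.symm, by rwa [inf_comm] at hint⟩
  loopless := by
    constructor
    rintro H ⟨hne, _⟩
    exact hne rfl

namespace Subgroup

theorem isAtom_iff_prime_natCard {G : Type*} [Group G] [Finite G] {H : Subgroup G} :
    IsAtom H ↔ (Nat.card H).Prime := by
  constructor
  · intro hH
    obtain ⟨q, hq, hqH⟩ := Nat.exists_prime_and_dvd (mt card_eq_one.1 hH.1)
    have := Fact.mk hq
    obtain ⟨c, hc⟩ := exists_prime_orderOf_dvd_card' (G := H) q hqH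
    have hcH : zpowers (c : G) = H := by
      refine (hH.le_iff.1 (zpowers_le.2 c.2)).resolve_left ?_
      rw [zpowers_eq_bot, ← orderOf_eq_one_iff, orderOf_coe, hc]
      exact hq.ne_one
    rwa [← hcH, Nat.card_zpowers, orderOf_coe, hc]
  · intro hp
    refine ⟨fun h => hp.ne_one (card_eq_one.2 h), fun K hKH => ?_⟩
    rcases (Nat.dvd_prime hp).1 (card_dvd_of_le hKH.le) with hK | hK
    · exact card_eq_one.1 hK
    · exact absurd (eq_of_le_of_card_ge hKH.le hK.ge) hKH.ne

theorem isAtom_of_natCard_eq_sq {G : Type*} [Group G] [Finite G] {p : ℕ} (hp : p.Prime)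
    (hG : Nat.card G = p ^ 2) {H : Subgroup G} (hbot : H ≠ ⊥) (htop : H ≠ ⊤) : IsAtom H := by
  rw [isAtom_iff_prime_natCard]
  obtain ⟨i, hi, hH⟩ := (Nat.dvd_prime_pow hp).1 (hG ▸ H.card_subgroup_dvd_card)
  interval_cases i
  · exact absurd (card_eq_one.1 (by simpa using hH)) hbot
  · rwa [hH, pow_one]
  · exact absurd ((card_eq_iff_eq_top H).1 (hH.trans hG.symm)) htop

noncomputable def prodEquivOfIsCompl {G : Type*} [CommGroup G] {A B : Subgroup G}
    (h : IsCompl A B) : A × B ≃* G :=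
  MulEquiv.ofBijective (A.subtype.coprod B.subtype)
    ⟨mul_injective_of_disjoint h.disjoint, fun g => by
      obtain ⟨a, ha, b, hb, rfl⟩ := mem_sup.1 (h.sup_eq_top ▸ mem_top g)
      exact ⟨(⟨a, ha⟩, ⟨b, hb⟩), rfl⟩⟩

end Subgroup

open Subgroup

theorem exists_mulEquiv_zmod_prod_of_isCompl {G : Type*} [CommGroup G] [Finite G]
    (hcyc : ¬IsCyclic G) {A B : Subgroup G} (hAB : IsCompl A B) (hA : IsAtom A)
    (hB : IsAtom B) :
    ∃ p : ℕ, p.Prime ∧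
      Nonempty (G ≃* Multiplicative (ZMod p) × Multiplicative (ZMod p)) := by
  have hp := isAtom_iff_prime_natCard.1 hA
  have hq := isAtom_iff_prime_natCard.1 hB
  have := Fact.mk hp
  have := Fact.mk hq
  let e := prodEquivOfIsCompl hAB
  have hpq : Nat.card A = Nat.card B := by
    by_contra hne
    exact hcyc (e.isCyclic.1 (Group.isCyclic_prod_iff.2
      ⟨isCyclic_of_prime_card rfl, isCyclic_of_prime_card rfl, (Nat.coprime_primes hp hq).2 hne⟩))
  exact ⟨_, hp, ⟨e.symm.trans (MulEquiv.prodCongr (mulEquivOfPrimeCardEq rfl (Nat.card_zmod _))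
    (mulEquivOfPrimeCardEq hpq.symm (Nat.card_zmod _)))⟩⟩

section interGraph

variable {G : Type*}

theorem interGraph_eq_bot_of_isAtom [Group G]
    (h : ∀ H : Subgroup G, H ≠ ⊥ → H ≠ ⊤ → IsAtom H) : interGraph G = ⊥ := by
  ext u v
  simp only [bot_adj, iff_false]
  rintro ⟨hne, hint⟩
  exact hint ((h _ u.2.1 u.2.2).disjoint_of_ne (h _ v.2.1 v.2.2) (mt Subtype.ext hne)).eq_bot

theorem interGraph_eq_bot_of_mulEquiv_zmod_prod [Group G] [Finite G] {p : ℕ} (hp : p.Prime)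
    (e : G ≃* Multiplicative (ZMod p) × Multiplicative (ZMod p)) : interGraph G = ⊥ := by
  have hcard : Nat.card G = p ^ 2 := by
    rw [Nat.card_congr e.toEquiv, Nat.card_prod, sq]
    exact congrArg₂ _ (Nat.card_zmod p) (Nat.card_zmod p)
  exact interGraph_eq_bot_of_isAtom fun H => isAtom_of_natCard_eq_sq hp hcard

theorem eq_or_eq_of_le_of_le_of_cliqueFree [Group G] (hG : (interGraph G).CliqueFree 3)
    {X Y Z : Subgroup G} (hX : X ≠ ⊥) (hXY : X ≤ Y) (hXZ : X ≤ Z) (hY : Y ≠ ⊤) (hZ : Z ≠ ⊤)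
    (hYZ : Y ≠ Z) : X = Y ∨ X = Z := by
  classical
  by_contra! hne
  apply hG {⟨X, hX, ne_top_of_le_ne_top hY hXY⟩, ⟨Y, ne_bot_of_le_ne_bot hX hXY, hY⟩,
    ⟨Z, ne_bot_of_le_ne_bot hX hXZ, hZ⟩}
  rw [is3Clique_triple_iff]
  refine ⟨⟨Subtype.coe_ne_coe.1 hne.1, ?_⟩, ⟨Subtype.coe_ne_coe.1 hne.2, ?_⟩,
    ⟨Subtype.coe_ne_coe.1 hYZ, ?_⟩⟩
  · exact ne_bot_of_le_ne_bot hX (le_inf le_rfl hXY)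
  · exact ne_bot_of_le_ne_bot hX (le_inf le_rfl hXZ)
  · exact ne_bot_of_le_ne_bot hX (le_inf hXY hXZ)

variable [CommGroup G] (hcyc : ¬IsCyclic G) (hG : (interGraph G).CliqueFree 3)
include hcyc hG

theorem isCoatom_of_cliqueFree {A : Subgroup G} (hA : A ≠ ⊥) (hA' : A ≠ ⊤) : IsCoatom A := by
  refine ⟨hA', fun E hAE => by_contra fun hE => ?_⟩
  obtain ⟨x, hx⟩ : ∃ x, x ∉ E := by simpa [eq_top_iff'] using hE
  set C := zpowers x
  have hCE : ¬C ≤ E := by simpa [C, zpowers_le] using hx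
  have hC : C ≠ ⊤ := fun h => hcyc (isCyclic_iff_exists_zpowers_eq_top.2 ⟨x, h⟩)
  have hCA : C ⊔ A = ⊤ := by
    by_contra hCA
    rcases eq_or_eq_of_le_of_le_of_cliqueFree hG hA hAE.le le_sup_right hE hCA
      (fun h => hCE (h ▸ le_sup_left)) with h | h
    · exact hAE.ne h
    · exact hCE ((h ▸ le_sup_left : C ≤ A).trans hAE.le)
  have hCE' : C ⊓ E = ⊥ := by
    by_contra hCE'
    rcases eq_or_eq_of_le_of_le_of_cliqueFree hG hCE' inf_le_left inf_le_right hC hE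
      (fun h => hCE h.le) with h | h
    · exact hCE (inf_eq_left.1 h)
    · exact hC (top_unique (hCA ▸ sup_le le_rfl (hAE.le.trans (h ▸ inf_le_left))))
  have hEA : E = A :=
    calc E = (A ⊔ C) ⊓ E := by rw [sup_comm, hCA, top_inf_eq]
      _ = A ⊔ C ⊓ E := sup_inf_assoc_of_le C hAE.le
      _ = A := by rw [hCE', sup_bot_eq]
  exact hAE.ne' hEA

theorem isAtom_of_cliqueFree {A : Subgroup G} (hA : A ≠ ⊥) (hA' : A ≠ ⊤) : IsAtom A :=
  ⟨hA, fun _ hXA => by_contra fun hX =>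
    hA' ((isCoatom_of_cliqueFree hcyc hG hX (hXA.trans_le le_top).ne).2 A hXA)⟩

theorem isCompl_of_cliqueFree {A B : Subgroup G} (hA : A ≠ ⊥) (hA' : A ≠ ⊤) (hB : B ≠ ⊥)
    (hB' : B ≠ ⊤) (hAB : A ≠ B) : IsCompl A B :=
  ⟨(isAtom_of_cliqueFree hcyc hG hA hA').disjoint_of_ne (isAtom_of_cliqueFree hcyc hG hB hB') hAB,
    (isCoatom_of_cliqueFree hcyc hG hA hA').codisjoint_of_ne
      (isCoatom_of_cliqueFree hcyc hG hB hB') hAB⟩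

theorem exists_mulEquiv_zmod_prod_of_cliqueFree [Finite G] :
    ∃ p : ℕ, p.Prime ∧
      Nonempty (G ≃* Multiplicative (ZMod p) × Multiplicative (ZMod p)) := by
  have : Nontrivial G := by
    contrapose! hcyc
    exact isCyclic_of_subsingleton
  have proper (x : G) : zpowers x ≠ ⊤ := fun h =>
    hcyc (isCyclic_iff_exists_zpowers_eq_top.2 ⟨x, h⟩)
  obtain ⟨a, ha⟩ := exists_ne (1 : G)
  obtain ⟨b, hb⟩ : ∃ b, b ∉ zpowers a := by simpa [eq_top_iff'] using proper a
  have hA : zpowers a ≠ ⊥ := by simpa using ha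
  have hB : zpowers b ≠ ⊥ := by
    simpa using fun h : b = 1 => hb (h ▸ one_mem _)
  have hAB : zpowers a ≠ zpowers b := fun h => hb (h ▸ mem_zpowers b)
  exact exists_mulEquiv_zmod_prod_of_isCompl hcyc
    (isCompl_of_cliqueFree hcyc hG hA (proper a) hB (proper b) hAB)
    (isAtom_of_cliqueFree hcyc hG hA (proper a)) (isAtom_of_cliqueFree hcyc hG hB (proper b))

end interGraph

theorem intersectionGraph_tfae_of_noncyclic_abelian
    (G : Type*) [CommGroup G] [Finite G] (h : ¬ IsCyclic G) :
    [(∃ p : ℕ, p.Prime ∧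
        Nonempty (G ≃* Multiplicative (ZMod p) × Multiplicative (ZMod p))),
     (interGraph G).CliqueFree 3,
     (interGraph G).IsAcyclic,
     (interGraph G).Colorable 2].TFAE := by
  have edgeless : (∃ p : ℕ, p.Prime ∧
      Nonempty (G ≃* Multiplicative (ZMod p) × Multiplicative (ZMod p))) →
      interGraph G = ⊥ := fun ⟨_, hp, ⟨e⟩⟩ => interGraph_eq_bot_of_mulEquiv_zmod_prod hp e
  tfae_have 1 → 2 := fun h1 => edgeless h1 ▸ cliqueFree_bot (by norm_num)
  tfae_have 1 → 3 := fun h1 => edgeless h1 ▸ isAcyclic_bot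
  tfae_have 1 → 4 := fun h1 => (colorable_one_iff.2 (edgeless h1)).mono one_le_two
  tfae_have 3 → 2 := fun h3 => h3.cliqueFree le_rfl
  tfae_have 4 → 2 := fun h4 => h4.cliqueFree (by norm_num)
  tfae_have 2 → 1 := fun h2 => exists_mulEquiv_zmod_prod_of_cliqueFree h h2
  tfae_finish
end

section
/- Let p be a prime, let α ≥ 3, and let G be a non-abelian group of order p^α. Then the intersection graph of subgroups I(G) contains a triangle, i.e., I(G) has a clique on 3 vertices. -/
open SimpleGraph

section

open Subgroup

variable {G : Type*} [Group G]

lemma interGraph_adj_of_le {N : Subgroup G} (hN : N ≠ ⊥)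
    {H K : {H : Subgroup G // H ≠ ⊥ ∧ H ≠ ⊤}} (hHK : H.1 ≠ K.1) (hNH : N ≤ H.1) (hNK : N ≤ K.1) :
    (interGraph G).Adj H K :=
  ⟨fun h => hHK (congrArg Subtype.val h), fun h => hN (le_bot_iff.mp (h ▸ le_inf hNH hNK))⟩

lemma exists_interGraph_isNClique_three_of_le {N H K L : Subgroup G} (hN : N ≠ ⊥)
    (hNH : N ≤ H) (hNK : N ≤ K) (hNL : N ≤ L) (hH : H ≠ ⊤) (hK : K ≠ ⊤) (hL : L ≠ ⊤)
    (hHK : H ≠ K) (hHL : H ≠ L) (hKL : K ≠ L) :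
    ∃ s, (interGraph G).IsNClique 3 s := by
  classical
  have ne_bot {M : Subgroup G} (hNM : N ≤ M) : M ≠ ⊥ :=
    fun h => hN (le_bot_iff.mp (h ▸ hNM))
  refine ⟨{⟨H, ne_bot hNH, hH⟩, ⟨K, ne_bot hNK, hK⟩, ⟨L, ne_bot hNL, hL⟩}, ?_⟩
  rw [is3Clique_triple_iff]
  exact ⟨interGraph_adj_of_le hN hHK hNH hNK, interGraph_adj_of_le hN hHL hNH hNL,
    interGraph_adj_of_le hN hKL hNK hNL⟩

lemma exists_interGraph_isNClique_three_of_center_ne_bot (hZ : center G ≠ ⊥) {a b : G}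
    (hab : a * b ≠ b * a) : ∃ s, (interGraph G).IsNClique 3 s := by
  have ha : a ∈ centralizer {a} := mem_centralizer_singleton_iff.mpr rfl
  have hb : b ∈ centralizer {b} := mem_centralizer_singleton_iff.mpr rfl
  have ha' : a ∉ centralizer {b} := fun h => hab (mem_centralizer_singleton_iff.mp h)
  have hb' : b ∉ centralizer {a} := fun h => hab (mem_centralizer_singleton_iff.mp h).symm
  have haZ : a ∉ center G := fun h => hab (mem_center_iff.mp h b).symm
  have hbZ : b ∉ center G := fun h => hab (mem_center_iff.mp h a)
  exact exists_interGraph_isNClique_three_of_le hZ le_rfl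
    (center_le_centralizer _) (center_le_centralizer _)
    (fun h => haZ (h ▸ mem_top a)) (fun h => hb' (h ▸ mem_top b))
    (fun h => ha' (h ▸ mem_top a))
    (ha.ne_of_notMem' haZ).symm (hb.ne_of_notMem' hbZ).symm (ha.ne_of_notMem' ha')

end

theorem intersectionGraph_has_triangle_of_nonabelian_p_group_general
    (p α : ℕ) (hp : p.Prime) (G : Type*) [Group G]
    (hcard : Nat.card G = p ^ α) (hna : ¬ ∀ a b : G, a * b = b * a) :
    ∃ s, (interGraph G).IsNClique 3 s := by
  have : Fact p.Prime := ⟨hp⟩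
  have : Finite G := Nat.finite_of_card_ne_zero (hcard ▸ pow_ne_zero α hp.ne_zero)
  obtain ⟨a, b, hab⟩ : ∃ a b : G, a * b ≠ b * a := by simpa using hna
  have : Nontrivial G := ⟨a, b, fun h => hab (h ▸ rfl)⟩
  have hZ : Subgroup.center G ≠ ⊥ :=
    (Subgroup.nontrivial_iff_ne_bot _).mp (IsPGroup.of_card hcard).center_nontrivial
  exact exists_interGraph_isNClique_three_of_center_ne_bot hZ hab

theorem intersectionGraph_has_triangle_of_nonabelian_p_group
    (p α : ℕ) (hp : p.Prime) (hα : 3 ≤ α) (G : Type*) [Group G]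
    (hcard : Nat.card G = p ^ α) (hna : ¬ ∀ a b : G, a * b = b * a) :
    ∃ s, (interGraph G).IsNClique 3 s :=
  intersectionGraph_has_triangle_of_nonabelian_p_group_general p α hp G hcard hna
end

section
/- Let p and q be distinct primes and let G be a non-abelian group of order p^2 · q^2. Then the intersection graph of subgroups I(G) contains a triangle, i.e., I(G) has a clique on 3 vertices. -/
open SimpleGraph Pointwise

section Helpers

variable {G : Type*} [Group G]

/-- Three distinct proper subgroups above a common nontrivial subgroup give a triangle. -/
lemma triangle_of (A B C : Subgroup G) (hA : A ≠ ⊥) (hAB : A ≤ B) (hAC : A ≤ C)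
    (hB : B ≠ ⊤) (hC : C ≠ ⊤) (h1 : A ≠ B) (h2 : A ≠ C) (h3 : B ≠ C) :
    ∃ s, (interGraph G).IsNClique 3 s := by
  classical
  have hAtop : A ≠ ⊤ := fun h => hB (top_le_iff.mp (h ▸ hAB))
  have hBbot : B ≠ ⊥ := fun h => hA (le_bot_iff.mp (h ▸ hAB))
  have hCbot : C ≠ ⊥ := fun h => hA (le_bot_iff.mp (h ▸ hAC))
  refine ⟨{⟨A, hA, hAtop⟩, ⟨B, hBbot, hB⟩, ⟨C, hCbot, hC⟩}, ?_⟩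
  rw [is3Clique_triple_iff]
  refine ⟨⟨?_, ?_⟩, ⟨?_, ?_⟩, ⟨?_, ?_⟩⟩
  · exact fun h => h1 (congrArg Subtype.val h)
  · rw [inf_eq_left.mpr hAB]; exact hA
  · exact fun h => h2 (congrArg Subtype.val h)
  · rw [inf_eq_left.mpr hAC]; exact hA
  · exact fun h => h3 (congrArg Subtype.val h)
  · exact fun h => hA (le_bot_iff.mp (h ▸ le_inf hAB hAC))

end Helpers


set_option maxHeartbeats 1000000 in
lemma key (p q : ℕ) (hp : p.Prime) (hq : q.Prime) (hlt : p < q)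
    (G : Type*) [Group G] (hcard : Nat.card G = p ^ 2 * q ^ 2) :
    ∃ s, (interGraph G).IsNClique 3 s := by
  classical
  have hpq : p ≠ q := hlt.ne
  have hp2 : 2 ≤ p := hp.two_le
  have hq2 : 2 ≤ q := hq.two_le
  haveI : Fact p.Prime := ⟨hp⟩
  haveI : Fact q.Prime := ⟨hq⟩
  have hG0 : Nat.card G ≠ 0 := by rw [hcard]; positivity
  haveI : Finite G := Nat.finite_of_card_ne_zero hG0
  -- factorization facts
  have hfp : (Nat.card G).factorization p = 2 := by
    rw [hcard, Nat.factorization_mul (by positivity) (by positivity),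
      hp.factorization_pow, hq.factorization_pow]
    simp [Finsupp.single_apply, hpq, Ne.symm hpq]
  have hfq : (Nat.card G).factorization q = 2 := by
    rw [hcard, Nat.factorization_mul (by positivity) (by positivity),
      hp.factorization_pow, hq.factorization_pow]
    simp [Finsupp.single_apply, hpq, Ne.symm hpq]
  obtain ⟨P⟩ : Nonempty (Sylow p G) := inferInstance
  obtain ⟨Q⟩ : Nonempty (Sylow q G) := inferInstance
  have hPcard : Nat.card P.1 = p ^ 2 := by
    rw [Sylow.card_eq_multiplicity, hfp]
  have hQcard : Nat.card Q.1 = q ^ 2 := by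
    rw [Sylow.card_eq_multiplicity, hfq]
  -- small subgroups of prime order inside the Sylows
  have exists_small : ∀ (r : ℕ), r.Prime → ∀ (R : Subgroup G), Nat.card R = r ^ 2 →
      ∃ R₀ : Subgroup G, R₀ ≤ R ∧ Nat.card R₀ = r := by
    intro r hr R hR
    haveI : Fact r.Prime := ⟨hr⟩
    obtain ⟨K, hK⟩ := Sylow.exists_subgroup_card_pow_prime (G := R) r (n := 1)
      (by rw [hR]; exact pow_dvd_pow r one_le_two)
    refine ⟨K.map R.subtype, Subgroup.map_subtype_le K, ?_⟩
    rw [← Nat.card_congr (K.equivMapOfInjective R.subtype R.subtype_injective).toEquiv,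
      hK, pow_one]
  obtain ⟨P₀, hP₀le, hP₀card⟩ := exists_small p hp P.1 hPcard
  obtain ⟨Q₀, hQ₀le, hQ₀card⟩ := exists_small q hq Q.1 hQcard
  -- the generic step: if the normalizer of the Sylow `r`-subgroup `R` is not `R` itself,
  -- we find a triangle.
  have step : ∀ (r s : ℕ), r.Prime → s.Prime → r ≠ s → Nat.card G = r ^ 2 * s ^ 2 →
      ∀ (R R₀ S₀ : Subgroup G), Nat.card R = r ^ 2 → R₀ ≤ R → Nat.card R₀ = r →
      Nat.card S₀ = s → Subgroup.normalizer (R : Set G) ≠ R → ∃ t, (interGraph G).IsNClique 3 t := by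
    intro r s hr hs hrs hGrs R R₀ S₀ hR hR₀le hR₀ hS₀ hne
    have hr2 : 2 ≤ r := hr.two_le
    have hs2 : 2 ≤ s := hs.two_le
    have hR₀bot : R₀ ≠ ⊥ := by
      intro h; rw [h, Subgroup.card_bot] at hR₀; omega
    have hRtop : R ≠ ⊤ := by
      intro h; rw [h, Subgroup.card_top, hGrs] at hR
      have h1 : 0 < r ^ 2 := by positivity
      have h2 : s ^ 2 = 1 := by
        have := Nat.eq_of_mul_eq_mul_left h1 (hR.trans (mul_one (r ^ 2)).symm)
        exact this
      have h3 : 2 * s ≤ s ^ 2 := by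
        rw [pow_two]; exact Nat.mul_le_mul_right s hs2
      omega
    have hR₀R : R₀ ≠ R := by
      intro h; rw [h, hR] at hR₀
      have h3 : 2 * r ≤ r ^ 2 := by
        rw [pow_two]; exact Nat.mul_le_mul_right r hr2
      omega
    by_cases htop : Subgroup.normalizer (R : Set G) = ⊤
    · -- R is normal; use C = R ⊔ S₀, a proper subgroup of order dividing r²s
      haveI hnorm : R.Normal := Subgroup.normalizer_eq_top_iff.mp htop
      have hset : ((R ⊔ S₀ : Subgroup G) : Set G) = (R : Set G) * (S₀ : Set G) :=
        Subgroup.normal_mul R S₀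
      have hCle : Nat.card (R ⊔ S₀ : Subgroup G) ≤ r ^ 2 * s := by
        have h1 : Nat.card (R ⊔ S₀ : Subgroup G) =
            Nat.card ((R : Set G) * (S₀ : Set G)) := by
          rw [← hset]; rfl
        rw [h1]
        calc Nat.card ((R : Set G) * (S₀ : Set G))
            ≤ Nat.card (R : Set G) * Nat.card (S₀ : Set G) := Set.natCard_mul_le
          _ = r ^ 2 * s := by
              rw [show Nat.card (R : Set G) = Nat.card R from rfl,
                show Nat.card (S₀ : Set G) = Nat.card S₀ from rfl, hR, hS₀]
      have hsdvd : s ∣ Nat.card (R ⊔ S₀ : Subgroup G) := by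
        rw [← hS₀]; exact Subgroup.card_dvd_of_le le_sup_right
      have hCtop : (R ⊔ S₀ : Subgroup G) ≠ ⊤ := by
        intro h; rw [h, Subgroup.card_top, hGrs] at hCle
        have h1 : 0 < r ^ 2 := by positivity
        have h2 : s ^ 2 ≤ s := Nat.le_of_mul_le_mul_left hCle h1
        have h3 : 2 * s ≤ s ^ 2 := by
          rw [pow_two]; exact Nat.mul_le_mul_right s hs2
        omega
      refine triangle_of R₀ R (R ⊔ S₀) hR₀bot hR₀le (hR₀le.trans le_sup_left)
        hRtop hCtop hR₀R ?_ ?_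
      · intro h; rw [← h, hR₀] at hsdvd
        exact hrs ((Nat.prime_dvd_prime_iff_eq hs hr).mp hsdvd).symm
      · intro h; rw [← h, hR] at hsdvd
        have : s ∣ r := hs.dvd_of_dvd_pow hsdvd
        exact hrs ((Nat.prime_dvd_prime_iff_eq hs hr).mp this).symm
    · -- R < normalizer < ⊤
      have hRleN : R ≤ Subgroup.normalizer (R : Set G) := Subgroup.le_normalizer
      refine triangle_of R₀ R (Subgroup.normalizer (R : Set G)) hR₀bot hR₀le (hR₀le.trans hRleN)
        hRtop htop hR₀R ?_ (fun h => hne h.symm)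
      intro h
      have : Nat.card R ≤ Nat.card R₀ := h ▸ Subgroup.card_le_of_le hRleN
      rw [hR, hR₀] at this
      have h3 : 2 * r ≤ r ^ 2 := by
        rw [pow_two]; exact Nat.mul_le_mul_right r hr2
      omega
  -- apply the step to both primes
  by_cases hNP : Subgroup.normalizer (P.1 : Set G) = P.1
  swap
  · exact step p q hp hq hpq hcard P.1 P₀ Q₀ hPcard hP₀le hP₀card hQ₀card hNP
  by_cases hNQ : Subgroup.normalizer (Q.1 : Set G) = Q.1
  swap
  · exact step q p hq hp hpq.symm (by rw [hcard]; ring) Q.1 Q₀ P₀ hQcard hQ₀le hQ₀card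
      hP₀card hNQ
  -- now both Sylow subgroups are self-normalizing
  have hnp : Nat.card (Sylow p G) = q ^ 2 := by
    rw [Sylow.card_eq_index_normalizer P, ← P.coe_coe, hNP]
    have h1 := Subgroup.card_mul_index P.1
    rw [hPcard, hcard] at h1
    have hppos : 0 < p ^ 2 := by positivity
    exact Nat.eq_of_mul_eq_mul_left hppos h1
  have hnq : Nat.card (Sylow q G) = p ^ 2 := by
    rw [Sylow.card_eq_index_normalizer Q, ← Q.coe_coe, hNQ]
    have h1 := Subgroup.card_mul_index Q.1
    rw [hQcard, hcard] at h1
    have hqpos : 0 < q ^ 2 := by positivity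
    apply Nat.eq_of_mul_eq_mul_left hqpos
    rw [h1]; ring
  -- congruences force p = 2, q = 3
  have hmodq : p ^ 2 ≡ 1 [MOD q] := hnq ▸ card_sylow_modEq_one q G
  have hqdvd : q ∣ p ^ 2 - 1 := (Nat.modEq_iff_dvd' (by nlinarith)).mp hmodq.symm
  obtain ⟨m, rfl⟩ : ∃ m, p = m + 1 := ⟨p - 1, by omega⟩
  have hfact : (m + 1) ^ 2 - 1 = m * (m + 2) := by
    have : (m + 1) ^ 2 = m * (m + 2) + 1 := by ring
    omega
  rw [hfact] at hqdvd
  have hq3 : q = m + 2 := by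
    rcases (Nat.Prime.dvd_mul hq).mp hqdvd with h | h
    · have := Nat.le_of_dvd (by omega) h; omega
    · have h1 := Nat.le_of_dvd (by omega) h
      omega
  have hp2' : m + 1 = 2 := by
    by_contra hne2
    have hodd : Odd (m + 1) := hp.odd_of_ne_two hne2
    have heven : Even (m + 2) := by
      rcases hodd with ⟨k, hk⟩; exact ⟨k + 1, by omega⟩
    have := (Nat.Prime.even_iff hq).mp (hq3 ▸ heven)
    omega
  have hm : m = 1 := by omega
  subst hm
  have hq' : q = 3 := hq3
  subst hq'
  -- now |G| = 36, there are 4 Sylow 3-subgroups, the action on them has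
  -- nontrivial kernel contained in every Sylow 3-subgroup
  have hcard36 : Nat.card G = 36 := by rw [hcard]; norm_num
  haveI : Fintype (Sylow 3 G) := Fintype.ofFinite _
  set φ := MulAction.toPermHom G (Sylow 3 G) with hφ
  have hker : φ.ker ≠ ⊥ := by
    intro h
    have hinj : Function.Injective φ := (MonoidHom.ker_eq_bot_iff φ).mp h
    have hle : Nat.card G ≤ Nat.card (Equiv.Perm (Sylow 3 G)) :=
      Nat.card_le_card_of_injective φ hinj
    rw [hcard36, Nat.card_eq_fintype_card, Fintype.card_perm, ← Nat.card_eq_fintype_card,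
      hnq] at hle
    norm_num [Nat.factorial] at hle
  -- kernel is contained in every Sylow 3-subgroup
  have hKQ : φ.ker ≤ Q.1 := by
    intro g hg
    have hfix : g • Q = Q := by
      have h1 : φ g = 1 := MonoidHom.mem_ker.mp hg
      have : (φ g) Q = Q := by rw [h1]; rfl
      exact this
    exact hNQ ▸ Sylow.smul_eq_iff_mem_normalizer.mp hfix
  have hKle : ∀ R : Sylow 3 G, φ.ker ≤ R.1 := by
    intro R g hg
    obtain ⟨c, rfl⟩ := MulAction.exists_smul_eq G Q R
    have hconj : c⁻¹ * g * c ∈ φ.ker := by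
      have := (MonoidHom.normal_ker φ).conj_mem g hg c⁻¹
      simpa [mul_assoc] using this
    have hmem : c⁻¹ * g * c ∈ Q.1 := hKQ hconj
    have : g ∈ MulAut.conj c • Q.1 := by
      rw [Subgroup.mem_pointwise_smul_iff_inv_smul_mem]
      simpa [MulAut.smul_def, mul_assoc] using hmem
    rwa [← Sylow.coe_subgroup_smul] at this
  -- pick two distinct Sylow 3-subgroups
  haveI : Nontrivial (Sylow 3 G) := by
    have h1 : 1 < Nat.card (Sylow 3 G) := by rw [hnq]; norm_num
    rw [Nat.card_eq_fintype_card] at h1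
    exact Fintype.one_lt_card_iff_nontrivial.mp h1
  obtain ⟨Q2, hQ2ne⟩ := exists_ne Q
  have hQ2card : Nat.card Q2.1 = 3 ^ 2 := by
    rw [Sylow.card_eq_multiplicity, hfq]
  -- the triangle
  obtain ⟨x, hxK, hx1⟩ := (Subgroup.bot_or_exists_ne_one φ.ker).resolve_left hker
  have hAbot : Q.1 ⊓ Q2.1 ≠ ⊥ := by
    intro h
    have hx : x ∈ Q.1 ⊓ Q2.1 := ⟨hKQ hxK, hKle Q2 hxK⟩
    rw [h, Subgroup.mem_bot] at hx
    exact hx1 hx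
  have hQtop' : Q.1 ≠ ⊤ := by
    intro h; rw [h, Subgroup.card_top, hcard36] at hQcard; norm_num at hQcard
  have hQ2top : Q2.1 ≠ ⊤ := by
    intro h; rw [h, Subgroup.card_top, hcard36] at hQ2card; norm_num at hQ2card
  have hQQ2 : Q.1 ≠ Q2.1 := fun h => hQ2ne (Sylow.ext h).symm
  refine triangle_of (Q.1 ⊓ Q2.1) Q.1 Q2.1 hAbot inf_le_left inf_le_right
    hQtop' hQ2top ?_ ?_ hQQ2
  · intro h
    have hle2 : Q.1 ≤ Q2.1 := h ▸ inf_le_right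
    exact hQQ2 (Subgroup.eq_of_le_of_card_ge hle2 (by rw [hQcard, hQ2card]))
  · intro h
    have hle2 : Q2.1 ≤ Q.1 := h ▸ inf_le_left
    exact hQQ2 (Subgroup.eq_of_le_of_card_ge hle2 (by rw [hQcard, hQ2card])).symm

theorem intersectionGraph_has_triangle_of_nonabelian_p2q2
    (p q : ℕ) (hp : p.Prime) (hq : q.Prime) (hpq : p ≠ q)
    (G : Type*) [Group G] (hcard : Nat.card G = p ^ 2 * q ^ 2)
    (hna : ¬ ∀ a b : G, a * b = b * a) :
    ∃ s, (interGraph G).IsNClique 3 s := by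
  rcases hpq.lt_or_gt with h | h
  · exact key p q hp hq h G hcard
  · exact key q p hq hp h G (by rw [hcard]; ring)
end

section
/- Let p, q, r be distinct primes and let G be a non-abelian solvable group of order p^2 · q · r. Then the intersection graph of subgroups I(G) contains a triangle, i.e., I(G) has a clique on 3 vertices. -/
open SimpleGraph

/-!
Ω counts prime factors with multiplicity. A finite solvable group `G` has a subgroup `H` with
`Ω |H| = n` for every `n ≤ Ω |G|`: split along a nontrivial proper normal subgroup `N`, which
exists unless `G` is simple, hence of prime order, and lift such a subgroup from `N` or `G ⧸ N`.
For `|G| = p²qr` we have `Ω |G| = 4`, so nesting this three times gives a chain `H < K < L` of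
nontrivial proper subgroups, and such a chain is a triangle of the intersection graph.
-/

open ArithmeticFunction
open scoped ArithmeticFunction.Omega

theorem IsSimpleGroup.prime_card_of_isSolvable {G : Type*} [Group G] [IsSimpleGroup G]
    [Group.IsSolvable G] : (Nat.card G).Prime :=
  have : IsMulCommutative G := ⟨⟨IsSimpleGroup.comm_iff_isSolvable.mpr ‹_›⟩⟩
  Group.is_simple_iff_prime_card.mp ‹_›

theorem Subgroup.cardFactors_card_comap_mk' {G : Type*} [Group G] (N : Subgroup G) [N.Normal]
    [Finite G] (K : Subgroup (G ⧸ N)) :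
    Ω (Nat.card (K.comap (QuotientGroup.mk' N))) = Ω (Nat.card N) + Ω (Nat.card K) :=
  (QuotientGroup.card_preimage_mk N K).symm ▸ cardFactors_mul Nat.card_pos.ne' Nat.card_pos.ne'

theorem Group.IsSolvable.exists_subgroup_cardFactors_card_eq {G : Type*} [Group G] [Finite G]
    [Group.IsSolvable G] {n : ℕ} (hn : n ≤ Ω (Nat.card G)) :
    ∃ H : Subgroup G, Ω (Nat.card H) = n := by
  induction h : Nat.card G using Nat.strong_induction_on generalizing G n with
  | _ m ih =>
  subst h
  rcases Nat.eq_zero_or_pos n with rfl | hn0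
  · exact ⟨⊥, by simp⟩
  rcases hn.eq_or_lt with rfl | hnG
  · exact ⟨⊤, by simp⟩
  obtain ⟨N, hN, hNbot, hNtop⟩ : ∃ N : Subgroup G, N.Normal ∧ N ≠ ⊥ ∧ N ≠ ⊤ := by
    by_contra! hsimple
    obtain _ | _ := subsingleton_or_nontrivial G
    · rw [Nat.card_of_subsingleton (1 : G), cardFactors_one] at hnG
      omega
    have : IsSimpleGroup G := ⟨fun N hN => or_iff_not_imp_left.mpr (hsimple N hN)⟩
    rw [cardFactors_apply_prime IsSimpleGroup.prime_card_of_isSolvable] at hnG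
    omega
  have hcard : Nat.card G = Nat.card (G ⧸ N) * Nat.card N :=
    N.card_eq_card_quotient_mul_card_subgroup
  have hsplit : Ω (Nat.card G) = Ω (Nat.card (G ⧸ N)) + Ω (Nat.card N) :=
    hcard ▸ cardFactors_mul Nat.card_pos.ne' Nat.card_pos.ne'
  have hN1 : 1 < Nat.card N := N.one_lt_card_iff_ne_bot.mpr hNbot
  have hQ1 : 1 < Nat.card (G ⧸ N) := N.index_eq_card ▸ N.one_lt_index_of_ne_top hNtop
  by_cases hnN : n ≤ Ω (Nat.card N)
  · obtain ⟨H, hH⟩ := ih _ (hcard ▸ lt_mul_of_one_lt_left Nat.card_pos hQ1) hnN rfl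
    exact ⟨H.map N.subtype, by rwa [Subgroup.card_map_of_injective N.subtype_injective]⟩
  · obtain ⟨K, hK⟩ := ih _ (hcard ▸ lt_mul_of_one_lt_right Nat.card_pos hN1)
      (G := G ⧸ N) (n := n - Ω (Nat.card N)) (by omega) rfl
    exact ⟨K.comap (QuotientGroup.mk' N), by rw [N.cardFactors_card_comap_mk', hK]; omega⟩

theorem Subgroup.exists_le_cardFactors_card_eq {G : Type*} [Group G] [Finite G]
    [Group.IsSolvable G] (K : Subgroup G) {n : ℕ} (hn : n ≤ Ω (Nat.card K)) :
    ∃ H ≤ K, Ω (Nat.card H) = n := by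
  obtain ⟨H, hH⟩ := Group.IsSolvable.exists_subgroup_cardFactors_card_eq hn
  exact ⟨H.map K.subtype, K.map_subtype_le H,
    by rwa [Subgroup.card_map_of_injective K.subtype_injective]⟩

theorem interGraph_exists_isNClique_three_of_lt {G : Type*} [Group G] {H K L : Subgroup G}
    (hH : H ≠ ⊥) (hHK : H < K) (hKL : K < L) (hL : L ≠ ⊤) :
    ∃ s, (interGraph G).IsNClique 3 s := by
  classical
  have hK : K ≠ ⊥ := ((bot_lt_iff_ne_bot.mpr hH).trans hHK).ne'
  refine ⟨{⟨H, hH, ne_top_of_lt (hHK.trans hKL)⟩, ⟨K, hK, ne_top_of_lt hKL⟩,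
    ⟨L, ((bot_lt_iff_ne_bot.mpr hK).trans hKL).ne', hL⟩}, is3Clique_triple_iff.mpr
    ⟨⟨(hHK.ne <| congrArg Subtype.val ·), by rwa [inf_of_le_left hHK.le]⟩,
      ⟨((hHK.trans hKL).ne <| congrArg Subtype.val ·),
        by rwa [inf_of_le_left (hHK.trans hKL).le]⟩,
      ⟨(hKL.ne <| congrArg Subtype.val ·), by rwa [inf_of_le_left hKL.le]⟩⟩⟩

theorem intersectionGraph_has_triangle_of_nonabelian_solvable_p2qr_general
    (p q r : ℕ) (hp : p.Prime) (hq : q.Prime) (hr : r.Prime)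
    (G : Type*) [Group G] [Group.IsSolvable G] (hcard : Nat.card G = p ^ 2 * q * r) :
    ∃ s, (interGraph G).IsNClique 3 s := by
  have hΩ : Ω (Nat.card G) = 4 := by
    rw [hcard, cardFactors_mul (by simp [hp.ne_zero, hq.ne_zero]) hr.ne_zero,
      cardFactors_mul (pow_ne_zero 2 hp.ne_zero) hq.ne_zero, cardFactors_apply_prime_pow hp,
      cardFactors_apply_prime hq, cardFactors_apply_prime hr]
  have : Finite G := Nat.finite_of_card_ne_zero fun h => by simp [h] at hΩ
  obtain ⟨L, -, hL⟩ := (⊤ : Subgroup G).exists_le_cardFactors_card_eq (n := 3)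
    (by rw [Subgroup.card_top, hΩ]; omega)
  obtain ⟨K, hKL, hK⟩ := L.exists_le_cardFactors_card_eq (n := 2) (by omega)
  obtain ⟨H, hHK, hH⟩ := K.exists_le_cardFactors_card_eq (n := 1) (by omega)
  refine interGraph_exists_isNClique_three_of_lt ?_
    (hHK.lt_of_ne ?_) (hKL.lt_of_ne ?_) ?_ <;> rintro rfl
  · simp at hH
  · omega
  · omega
  · rw [Subgroup.card_top] at hL; omega

theorem intersectionGraph_has_triangle_of_nonabelian_solvable_p2qr
    (p q r : ℕ) (hp : p.Prime) (hq : q.Prime) (hr : r.Prime)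
    (hpq : p ≠ q) (hpr : p ≠ r) (hqr : q ≠ r)
    (G : Type*) [Group G] [Group.IsSolvable G] (hcard : Nat.card G = p ^ 2 * q * r)
    (hna : ¬ ∀ a b : G, a * b = b * a) :
    ∃ s, (interGraph G).IsNClique 3 s :=
  intersectionGraph_has_triangle_of_nonabelian_solvable_p2qr_general p q r hp hq hr G hcard
end

section
/- Let p, q, r be distinct primes and let G be a non-abelian solvable group of order p^3 · q · r. Then the intersection graph of subgroups I(G) contains K_5 as a subgraph, i.e., I(G) has a clique on 5 vertices. -/
open SimpleGraph

/-! A nontrivial finite solvable group has a nontrivial normal `s`-subgroup `S` for a prime `s`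
(a Sylow subgroup of the last nontrivial term of its derived series). When `|G| = p³qr`, joining
`S` with subgroups of coprime prime-power order yields five proper subgroups of pairwise distinct
orders that contain a common nontrivial subgroup: `S, S ⊔ P₁, S ⊔ P₂, S ⊔ P₃, S ⊔ R` if `s = q`
(`|Pᵢ| = pⁱ`, `|R| = r`), and `C, P₂, P₃, S ⊔ Q, S ⊔ R` with `C ≤ S` of order `p` and
`C ≤ P₂, P₃` if `s = p`. -/

theorem Nat.pow_mul_pow_mul_pow_injective {p q r : ℕ} (hp : p.Prime) (hq : q.Prime)
    (hr : r.Prime) (hpq : p ≠ q) (hpr : p ≠ r) (hqr : q ≠ r) :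
    Function.Injective fun e : ℕ × ℕ × ℕ => p ^ e.1 * q ^ e.2.1 * r ^ e.2.2 := by
  rintro ⟨a, b, c⟩ ⟨a', b', c'⟩ h
  have hval (t : ℕ) : (p ^ a * q ^ b * r ^ c).factorization t =
      (p ^ a' * q ^ b' * r ^ c').factorization t := congrArg (·.factorization t) h
  have hp' := hval p
  have hq' := hval q
  have hr' := hval r
  simp only [ne_eq, mul_eq_zero, pow_eq_zero_iff', hp.ne_zero, hq.ne_zero, hr.ne_zero,
    false_and, or_self, not_false_eq_true, Nat.factorization_mul, hp.factorization_pow,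
    hq.factorization_pow, hr.factorization_pow, Finsupp.coe_add, Pi.add_apply,
    Finsupp.single_eq_same, Finsupp.single_eq_of_ne, hpq, hpr, hqr, hpq.symm, hpr.symm, hqr.symm,
    add_zero, zero_add] at hp' hq' hr'
  rw [hp', hq', hr']

section

variable {G : Type*} [Group G]

theorem Subgroup.card_sup_of_coprime (N H : Subgroup G) [N.Normal]
    (h : (Nat.card N).Coprime (Nat.card H)) : Nat.card ↥(N ⊔ H) = Nat.card N * Nat.card H :=
  calc Nat.card ↥(N ⊔ H) = (⊥ : Subgroup G).relIndex (N ⊔ H) := (relIndex_bot_left _).symm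
    _ = (⊥ : Subgroup G).relIndex N * N.relIndex (N ⊔ H) :=
      (relIndex_mul_relIndex _ _ _ bot_le le_sup_left).symm
    _ = Nat.card N * Nat.card H := by
      rw [relIndex_sup_left, ← inf_relIndex_right N H, (disjoint_of_coprime_natCard h).eq_bot,
        relIndex_bot_left, relIndex_bot_left]

theorem IsPGroup.dvd_card_of_ne_bot {p : ℕ} [Fact p.Prime] {S : Subgroup G}
    (hSp : IsPGroup p S) (hS : S ≠ ⊥) : p ∣ Nat.card S :=
  hSp.card_eq_or_dvd.resolve_left fun h => hS (Subgroup.card_eq_one.mp h)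

theorem IsSolvable.exists_isMulCommutative_characteristic_ne_bot [Group.IsSolvable G]
    [Nontrivial G] : ∃ A : Subgroup G, A.Characteristic ∧ A ≠ ⊥ ∧ IsMulCommutative A := by
  classical
  have hex : ∃ n, derivedSeries G (n + 1) = ⊥ := by
    obtain ⟨n, hn⟩ := Group.IsSolvable.solvable (G := G)
    exact ⟨n, eq_bot_mono (derivedSeries_antitone G n.le_succ) hn⟩
  refine ⟨derivedSeries G (Nat.find hex), inferInstance, ?_, ?_⟩
  · cases h : Nat.find hex with
    | zero => simp
    | succ m => exact Nat.find_min hex (by omega)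
  · rw [← Subgroup.commutator_self_eq_bot_iff, ← derivedSeries_succ]
    exact Nat.find_spec hex

theorem IsSolvable.exists_normal_isPGroup_ne_bot [Finite G] [Group.IsSolvable G]
    [Nontrivial G] : ∃ s : ℕ, s.Prime ∧ ∃ S : Subgroup G, S.Normal ∧ S ≠ ⊥ ∧ IsPGroup s S := by
  obtain ⟨A, hAchar, hA, hAcomm⟩ :=
    IsSolvable.exists_isMulCommutative_characteristic_ne_bot (G := G)
  have hs : (Nat.card A).minFac.Prime :=
    Nat.minFac_prime ((Subgroup.one_lt_card_iff_ne_bot A).mpr hA).ne'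
  have := Fact.mk hs
  let P : Sylow (Nat.card A).minFac A := default
  have := P.characteristic_of_normal (Subgroup.normal_of_isMulCommutative _)
  refine ⟨_, hs, (P : Subgroup A).map A.subtype, inferInstance, ?_, P.isPGroup'.map _⟩
  rw [Ne, Subgroup.map_eq_bot_iff_of_injective _ A.subtype_injective]
  exact P.ne_bot_of_dvd_card (Nat.card A).minFac_dvd

end

namespace interGraph

variable {G : Type*} [Group G]

theorem exists_isNClique_of_le {ι : Type*} [Fintype ι] {C : Subgroup G} (hC : C ≠ ⊥)
    {K : ι → Subgroup G} (hK : Function.Injective K) (hCK : ∀ i, C ≤ K i)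
    (hKtop : ∀ i, K i ≠ ⊤) : ∃ s, (interGraph G).IsNClique (Fintype.card ι) s := by
  have hKbot (i : ι) : K i ≠ ⊥ := fun h => hC (le_bot_iff.mp (h ▸ hCK i))
  let v : ι ↪ {H : Subgroup G // H ≠ ⊥ ∧ H ≠ ⊤} :=
    ⟨fun i => ⟨K i, hKbot i, hKtop i⟩, fun i j h => hK (congrArg Subtype.val h)⟩
  refine ⟨Finset.univ.map v, ?_, by simp⟩
  simp only [Finset.coe_map, Finset.coe_univ, Set.image_univ]
  rintro _ ⟨i, rfl⟩ _ ⟨j, rfl⟩ hij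
  exact ⟨hij, fun h => hC (le_bot_iff.mp (h ▸ le_inf (hCK i) (hCK j)))⟩

variable {p q r : ℕ} (hp : p.Prime) (hq : q.Prime) (hr : r.Prime)
  (hpq : p ≠ q) (hpr : p ≠ r) (hqr : q ≠ r)
include hp hq hr hpq hpr hqr

theorem exists_isNClique_of_card_eq_pow_mul_pow_mul_pow {a b c : ℕ}
    (hG : Nat.card G = p ^ a * q ^ b * r ^ c) {ι : Type*} [Fintype ι] {C : Subgroup G}
    (hC : C ≠ ⊥) (K : ι → Subgroup G) (e : ι → ℕ × ℕ × ℕ) (he : Function.Injective e)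
    (heG : ∀ i, e i ≠ (a, b, c))
    (hK : ∀ i, Nat.card (K i) = p ^ (e i).1 * q ^ (e i).2.1 * r ^ (e i).2.2)
    (hCK : ∀ i, C ≤ K i) : ∃ s, (interGraph G).IsNClique (Fintype.card ι) s := by
  have hinj := Nat.pow_mul_pow_mul_pow_injective hp hq hr hpq hpr hqr
  refine exists_isNClique_of_le hC (fun i j hij => he (hinj ?_)) hCK
    fun i hi => heG i (hinj ?_)
  · simp only [← hK, hij]
  · simp only [← hK, hi, Subgroup.card_top, hG]

theorem exists_isNClique_five_of_normal_qSubgroup [Finite G]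
    (hcard : Nat.card G = p ^ 3 * q * r) (S : Subgroup G) [S.Normal] (hS : S ≠ ⊥)
    (hSq : IsPGroup q S) : ∃ s, (interGraph G).IsNClique 5 s := by
  have := Fact.mk hp; have := Fact.mk hq; have := Fact.mk hr
  obtain ⟨k, hk⟩ := hSq.exists_card_eq
  have hP (i : ℕ) (hi : i ≤ 3) : ∃ P : Subgroup G, Nat.card P = p ^ i :=
    Sylow.exists_subgroup_card_pow_prime p
      ((pow_dvd_pow p hi).trans ⟨q * r, by rw [hcard]; ring⟩)
  obtain ⟨P₁, hP₁⟩ := hP 1 (by norm_num)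
  obtain ⟨P₂, hP₂⟩ := hP 2 (by norm_num)
  obtain ⟨P₃, hP₃⟩ := hP 3 le_rfl
  obtain ⟨R, hR⟩ :=
    Sylow.exists_subgroup_card_pow_prime r (n := 1) ⟨p ^ 3 * q, by rw [hcard]; ring⟩
  have hsup {H : Subgroup G} {a c : ℕ} (hH : Nat.card H = p ^ a * r ^ c) :
      Nat.card ↥(S ⊔ H) = p ^ a * q ^ k * r ^ c := by
    rw [Subgroup.card_sup_of_coprime S H, hk, hH]
    · ring
    rw [hk, hH]
    exact Nat.Coprime.mul_right (((Nat.coprime_primes hq hp).mpr hpq.symm).pow k a)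
      (((Nat.coprime_primes hq hr).mpr hqr).pow k c)
  simpa using exists_isNClique_of_card_eq_pow_mul_pow_mul_pow hp hq hr hpq hpr hqr
    (a := 3) (b := 1) (c := 1) (by simpa using hcard) hS
    ![S, S ⊔ P₁, S ⊔ P₂, S ⊔ P₃, S ⊔ R] ![(0, k, 0), (1, k, 0), (2, k, 0), (3, k, 0), (0, k, 1)]
    (by intro i j h; fin_cases i <;> fin_cases j <;> simp_all)
    (by intro i; fin_cases i <;> simp)
    (by
      intro i; fin_cases i
      · simp [hk]
      · exact hsup (by simpa using hP₁)
      · exact hsup (by simpa using hP₂)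
      · exact hsup (by simpa using hP₃)
      · exact hsup (by simpa using hR))
    (by intro i; fin_cases i <;> simp)

theorem exists_isNClique_five_of_normal_pSubgroup [Finite G]
    (hcard : Nat.card G = p ^ 3 * q * r) (S : Subgroup G) [S.Normal] (hS : S ≠ ⊥)
    (hSp : IsPGroup p S) : ∃ s, (interGraph G).IsNClique 5 s := by
  have := Fact.mk hp; have := Fact.mk hq; have := Fact.mk hr
  obtain ⟨k, hk⟩ := hSp.exists_card_eq
  obtain ⟨C, hC⟩ := Sylow.exists_subgroup_card_pow_prime (G := S) p (n := 1)
    ((pow_one p).symm ▸ hSp.dvd_card_of_ne_bot hS)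
  set C₁ := C.map S.subtype
  have hC₁ : Nat.card C₁ = p ^ 1 := by
    rw [Subgroup.card_map_of_injective S.subtype_injective, hC]
  have hC₁S : C₁ ≤ S := Subgroup.map_subtype_le C
  have hP (i : ℕ) (h1 : 1 ≤ i) (h3 : i ≤ 3) : ∃ P : Subgroup G, Nat.card P = p ^ i ∧ C₁ ≤ P :=
    Sylow.exists_subgroup_card_pow_prime_le p
      ((pow_dvd_pow p h3).trans ⟨q * r, by rw [hcard]; ring⟩) C₁ hC₁ h1
  obtain ⟨P₂, hP₂, hC₁P₂⟩ := hP 2 (by norm_num) (by norm_num)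
  obtain ⟨P₃, hP₃, hC₁P₃⟩ := hP 3 (by norm_num) le_rfl
  obtain ⟨Q, hQ⟩ :=
    Sylow.exists_subgroup_card_pow_prime q (n := 1) ⟨p ^ 3 * r, by rw [hcard]; ring⟩
  obtain ⟨R, hR⟩ :=
    Sylow.exists_subgroup_card_pow_prime r (n := 1) ⟨p ^ 3 * q, by rw [hcard]; ring⟩
  have hsup {H : Subgroup G} {b c : ℕ} (hH : Nat.card H = q ^ b * r ^ c) :
      Nat.card ↥(S ⊔ H) = p ^ k * q ^ b * r ^ c := by
    rw [Subgroup.card_sup_of_coprime S H, hk, hH]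
    · ring
    rw [hk, hH]
    exact Nat.Coprime.mul_right (((Nat.coprime_primes hp hq).mpr hpq).pow k b)
      (((Nat.coprime_primes hp hr).mpr hpr).pow k c)
  simpa using exists_isNClique_of_card_eq_pow_mul_pow_mul_pow hp hq hr hpq hpr hqr
    (a := 3) (b := 1) (c := 1) (by simpa using hcard)
    ((Subgroup.one_lt_card_iff_ne_bot C₁).mp (by rw [hC₁, pow_one]; exact hp.one_lt))
    ![C₁, P₂, P₃, S ⊔ Q, S ⊔ R] ![(1, 0, 0), (2, 0, 0), (3, 0, 0), (k, 1, 0), (k, 0, 1)]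
    (by intro i j h; fin_cases i <;> fin_cases j <;> simp_all)
    (by intro i; fin_cases i <;> simp)
    (by
      intro i; fin_cases i
      · simpa using hC₁
      · simpa using hP₂
      · simpa using hP₃
      · exact hsup (by simpa using hQ)
      · exact hsup (by simpa using hR))
    (by intro i; fin_cases i <;> simp [hC₁P₂, hC₁P₃, hC₁S.trans le_sup_left])

end interGraph

theorem intersectionGraph_has_K5_of_nonabelian_solvable_p3qr_general
    (p q r : ℕ) (hp : p.Prime) (hq : q.Prime) (hr : r.Prime)
    (hpq : p ≠ q) (hpr : p ≠ r) (hqr : q ≠ r)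
    (G : Type*) [Group G] [Group.IsSolvable G] (hcard : Nat.card G = p ^ 3 * q * r) :
    ∃ s, (interGraph G).IsNClique 5 s := by
  have : Finite G :=
    Nat.finite_of_card_ne_zero (by simp [hcard, hp.ne_zero, hq.ne_zero, hr.ne_zero])
  have : Nontrivial G := Finite.one_lt_card_iff_nontrivial.mp (hcard ▸ one_lt_mul_of_lt_of_le
    (one_lt_mul_of_lt_of_le (Nat.one_lt_pow three_ne_zero hp.one_lt) hq.one_le) hr.one_le)
  obtain ⟨s, hs, S, hSn, hS, hSs⟩ := IsSolvable.exists_normal_isPGroup_ne_bot (G := G)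
  have := Fact.mk hs
  have hsG : s ∣ p ^ 3 * q * r :=
    hcard ▸ (hSs.dvd_card_of_ne_bot hS).trans S.card_subgroup_dvd_card
  rcases hs.dvd_mul.mp hsG with hspq | hsr
  · rcases hs.dvd_mul.mp hspq with hsp | hsq
    · obtain rfl := (Nat.prime_dvd_prime_iff_eq hs hp).mp (hs.dvd_of_dvd_pow hsp)
      exact interGraph.exists_isNClique_five_of_normal_pSubgroup hs hq hr hpq hpr hqr hcard S hS
        hSs
    · obtain rfl := (Nat.prime_dvd_prime_iff_eq hs hq).mp hsq
      exact interGraph.exists_isNClique_five_of_normal_qSubgroup hp hs hr hpq hpr hqr hcard S hS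
        hSs
  · obtain rfl := (Nat.prime_dvd_prime_iff_eq hs hr).mp hsr
    exact interGraph.exists_isNClique_five_of_normal_qSubgroup hp hs hq hpr hpq hqr.symm
      (by rw [hcard]; ring) S hS hSs

theorem intersectionGraph_has_K5_of_nonabelian_solvable_p3qr
    (p q r : ℕ) (hp : p.Prime) (hq : q.Prime) (hr : r.Prime)
    (hpq : p ≠ q) (hpr : p ≠ r) (hqr : q ≠ r)
    (G : Type*) [Group G] [Group.IsSolvable G] (hcard : Nat.card G = p ^ 3 * q * r)
    (hna : ¬ ∀ a b : G, a * b = b * a) :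
    ∃ s, (interGraph G).IsNClique 5 s :=
  intersectionGraph_has_K5_of_nonabelian_solvable_p3qr_general p q r hp hq hr hpq hpr hqr G hcard
end

section
/- Let p, q, r be distinct primes and let G be a non-abelian solvable group of order p^2 · q^2 · r. Then the intersection graph of subgroups I(G) contains K_5 as a subgraph, i.e., I(G) has a clique on 5 vertices. -/
open SimpleGraph

/-!
A solvable group `G` has a nontrivial normal subgroup `M` of prime-power order: a Sylow subgroup
of the last nontrivial term of the derived series, which is abelian. The preimages of the proper
subgroups of `G ⧸ M` are distinct proper subgroups of `G` all containing `M`, so they form a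
clique in the intersection graph. Up to swapping `p` and `q`, the order of `G ⧸ M` is `p q² r`,
`q² r` or `p² q²`, and a group of such an order has at least five proper subgroups: the trivial
one and, by Sylow's theorem, subgroups of four distinct prime-power orders. In order `q² r` there
are only three such orders, and the fifth subgroup is a second Sylow `r`-subgroup, or, if the
Sylow `r`-subgroup is normal, the preimage of a subgroup of order `q` of the quotient by it.
-/

lemma Nat.Prime.le_of_pow_dvd_pow_mul {p j a m : ℕ} (hp : p.Prime) (hpm : p.Coprime m)
    (h : p ^ j ∣ p ^ a * m) : j ≤ a :=
  (Nat.pow_dvd_pow_iff_le_right hp.one_lt).mp ((hpm.pow_left j).dvd_of_dvd_mul_right h)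

lemma Nat.not_isPrimePow_of_dvd {p q n : ℕ} (hp : p.Prime) (hq : q.Prime) (hpq : p ≠ q)
    (hpn : p ∣ n) (hqn : q ∣ n) : ¬ IsPrimePow n := by
  rw [isPrimePow_iff_unique_prime_dvd]
  rintro ⟨r, -, hr⟩
  exact hpq ((hr p ⟨hp, hpn⟩).trans (hr q ⟨hq, hqn⟩).symm)

section General

variable {G : Type*} [Group G]

lemma interGraph_isClique_of_le {M : Subgroup G} (hM : M ≠ ⊥)
    {s : Set {H : Subgroup G // H ≠ ⊥ ∧ H ≠ ⊤}} (hs : ∀ H ∈ s, M ≤ H.1) :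
    (interGraph G).IsClique s :=
  fun H hH K hK hHK => ⟨hHK, fun h => hM (le_bot_iff.mp (h ▸ le_inf (hs H hH) (hs K hK)))⟩

lemma exists_isNClique_interGraph_of_le_ncard_quotient [Finite G] (M : Subgroup G) [M.Normal]
    (hM : M ≠ ⊥) {n : ℕ} (hn : n ≤ {H : Subgroup (G ⧸ M) | H ≠ ⊤}.ncard) :
    ∃ s, (interGraph G).IsNClique n s := by
  classical
  have hsurj := QuotientGroup.mk'_surjective M
  have hle (H : Subgroup (G ⧸ M)) : M ≤ H.comap (QuotientGroup.mk' M) := by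
    simpa only [QuotientGroup.ker_mk'] using Subgroup.ker_le_comap (QuotientGroup.mk' M) H
  let preimage : {H : Subgroup (G ⧸ M) // H ≠ ⊤} ↪ {H : Subgroup G // H ≠ ⊥ ∧ H ≠ ⊤} :=
    { toFun := fun H => ⟨H.1.comap (QuotientGroup.mk' M),
        fun h => hM (le_bot_iff.mp (h ▸ hle H.1)),
        fun h => H.2 (Subgroup.comap_injective hsurj (h.trans (Subgroup.comap_top _).symm))⟩
      inj' := fun H K h => Subtype.ext (Subgroup.comap_injective hsurj (congrArg Subtype.val h)) }
  have : Fintype {H : Subgroup (G ⧸ M) // H ≠ ⊤} := Fintype.ofFinite _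
  obtain ⟨t, -, ht⟩ := Finset.exists_subset_card_eq
    (s := (Finset.univ : Finset {H : Subgroup (G ⧸ M) // H ≠ ⊤})) (n := n)
    (by
      rw [Finset.card_univ, ← Nat.card_eq_fintype_card]
      exact hn.trans_eq (Nat.card_coe_set_eq _).symm)
  refine ⟨t.map preimage, interGraph_isClique_of_le hM ?_, by rw [Finset.card_map, ht]⟩
  simp only [Finset.coe_map, Set.forall_mem_image]
  exact fun H _ => hle H.1

lemma Subgroup.ne_top_of_not_dvd_card {p : ℕ} {H : Subgroup G} (hpG : p ∣ Nat.card G)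
    (hpH : ¬ p ∣ Nat.card H) : H ≠ ⊤ := by
  rintro rfl
  rw [Subgroup.card_top] at hpH
  exact hpH hpG

lemma Subgroup.exists_lt_lt_top_of_quotient (N : Subgroup G) [N.Normal] {Y : Subgroup (G ⧸ N)}
    (hYb : Y ≠ ⊥) (hYt : Y ≠ ⊤) : ∃ X : Subgroup G, N < X ∧ X < ⊤ := by
  have hsurj := QuotientGroup.mk'_surjective N
  refine ⟨Y.comap (QuotientGroup.mk' N), ?_, ?_⟩
  · simpa only [MonoidHom.comap_bot, QuotientGroup.ker_mk'] using
      (Subgroup.comap_lt_comap_of_surjective hsurj).mpr (bot_lt_iff_ne_bot.mpr hYb)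
  · simpa only [Subgroup.comap_top] using
      (Subgroup.comap_lt_comap_of_surjective hsurj).mpr (lt_top_iff_ne_top.mpr hYt)

lemma Group.IsSolvable.exists_normal_ne_bot_isMulCommutative [IsSolvable G] [Nontrivial G] :
    ∃ N : Subgroup G, N.Normal ∧ N ≠ ⊥ ∧ IsMulCommutative N := by
  classical
  have hsolv := IsSolvable.solvable (G := G)
  obtain ⟨n, hn⟩ : ∃ n, Nat.find hsolv = n + 1 := Nat.exists_eq_succ_of_ne_zero fun h =>
    top_ne_bot (derivedSeries_zero G ▸ h ▸ Nat.find_spec hsolv)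
  refine ⟨derivedSeries G n, derivedSeries_normal G n, Nat.find_min hsolv (by omega), ?_⟩
  rw [← Subgroup.commutator_self_eq_bot_iff, ← derivedSeries_succ, ← hn]
  exact Nat.find_spec hsolv

/-- A Sylow subgroup of an abelian normal subgroup is characteristic in it, hence normal in `G`. -/
lemma Subgroup.exists_normal_isPGroup_ne_bot_of_isMulCommutative [Finite G] {N : Subgroup G}
    [N.Normal] [IsMulCommutative N] (hN : N ≠ ⊥) :
    ∃ p, p.Prime ∧ ∃ M : Subgroup G, M.Normal ∧ M ≠ ⊥ ∧ IsPGroup p M := by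
  set p := (Nat.card N).minFac
  have hp : p.Prime := Nat.minFac_prime (mt Subgroup.card_eq_one.mp hN)
  have := Fact.mk hp
  let P : Sylow p N := default
  have := P.characteristic_of_normal (Subgroup.normal_of_isMulCommutative _)
  refine ⟨p, hp, (P : Subgroup N).map N.subtype, inferInstance, ?_, P.isPGroup'.map _⟩
  rw [Ne, Subgroup.map_eq_bot_iff_of_injective _ N.subtype_injective]
  exact P.ne_bot_of_dvd_card (Nat.minFac_dvd _)

lemma Group.IsSolvable.exists_normal_isPGroup_ne_bot [Finite G] [IsSolvable G] [Nontrivial G] :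
    ∃ p, p.Prime ∧ ∃ M : Subgroup G, M.Normal ∧ M ≠ ⊥ ∧ IsPGroup p M := by
  obtain ⟨N, _, hNb, _⟩ := exists_normal_ne_bot_isMulCommutative (G := G)
  exact Subgroup.exists_normal_isPGroup_ne_bot_of_isMulCommutative hNb

end General

section Finite

variable {K : Type*} [Group K] [Finite K]

lemma Sylow.card_eq_pow_of_card_eq_pow_mul {p k m : ℕ} [Fact p.Prime] (hpm : ¬ p ∣ m)
    (h : Nat.card K = p ^ k * m) (P : Sylow p K) : Nat.card P = p ^ k := by
  have hp : p.Prime := Fact.out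
  have hm : m ≠ 0 := by rintro rfl; exact hpm (dvd_zero p)
  rw [P.card_eq_multiplicity, h, Nat.factorization_mul (pow_ne_zero _ hp.ne_zero) hm]
  simp [Nat.factorization_eq_zero_of_not_dvd hpm, hp.factorization_self]

lemma exists_subgroup_card_eq_ne_top {d : ℕ} (hd : IsPrimePow d) (hdK : d ∣ Nat.card K)
    (hK : ¬ IsPrimePow (Nat.card K)) : ∃ H : Subgroup K, H ≠ ⊤ ∧ Nat.card H = d := by
  obtain ⟨p, k, hp, -, rfl⟩ := (isPrimePow_nat_iff d).mp hd
  have := Fact.mk hp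
  obtain ⟨H, hH⟩ := Sylow.exists_subgroup_card_pow_prime p hdK
  refine ⟨H, ?_, hH⟩
  rintro rfl
  rw [Subgroup.card_top] at hH
  exact hK (hH ▸ hd)

lemma card_add_one_le_ncard_ne_top (D : Finset ℕ) {X : Subgroup K} (hX : X ≠ ⊤)
    (hD : ∀ d ∈ D, ∃ H : Subgroup K, H ≠ ⊤ ∧ H ≠ X ∧ Nat.card H = d) :
    D.card + 1 ≤ {H : Subgroup K | H ≠ ⊤}.ncard := by
  have hsub : (D : Set ℕ) ⊆ (fun H : Subgroup K => Nat.card H) '' ({H | H ≠ ⊤} \ {X}) := by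
    intro d hd
    obtain ⟨H, hHt, hHX, rfl⟩ := hD d hd
    exact ⟨H, ⟨hHt, hHX⟩, rfl⟩
  calc D.card + 1 = (D : Set ℕ).ncard + 1 := by rw [Set.ncard_coe_finset]
    _ ≤ ({H : Subgroup K | H ≠ ⊤} \ {X}).ncard + 1 := by
      gcongr
      exact (Set.ncard_le_ncard hsub (Set.toFinite _)).trans (Set.ncard_image_le (Set.toFinite _))
    _ = {H : Subgroup K | H ≠ ⊤}.ncard := Set.ncard_sdiff_singleton_add_one hX (Set.toFinite _)

lemma card_lt_ncard_ne_top_of_isPrimePow {p q : ℕ} (hp : p.Prime) (hq : q.Prime) (hpq : p ≠ q)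
    (hpK : p ∣ Nat.card K) (hqK : q ∣ Nat.card K) (D : Finset ℕ)
    (hD : ∀ d ∈ D, IsPrimePow d ∧ d ∣ Nat.card K) : D.card < {H : Subgroup K | H ≠ ⊤}.ncard := by
  have : Nontrivial K := Finite.one_lt_card_iff_nontrivial.mp
    (hp.one_lt.trans_le (Nat.le_of_dvd Nat.card_pos hpK))
  refine card_add_one_le_ncard_ne_top D bot_ne_top fun d hd => ?_
  obtain ⟨H, hHt, hH⟩ := exists_subgroup_card_eq_ne_top (hD d hd).1 (hD d hd).2
    (Nat.not_isPrimePow_of_dvd hp hq hpq hpK hqK)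
  refine ⟨H, hHt, fun hHb => (hD d hd).1.ne_one ?_, hH⟩
  rw [← hH, hHb, Subgroup.card_bot]

lemma five_le_ncard_ne_top_of_card_eq_sq_mul_mul {u v w : ℕ} (hu : u.Prime) (hv : v.Prime)
    (hw : w.Prime) (huv : u ≠ v) (huw : u ≠ w) (hvw : v ≠ w) (h : Nat.card K = u ^ 2 * v * w) :
    5 ≤ {H : Subgroup K | H ≠ ⊤}.ncard := by
  have huu : u ≠ u ^ 2 := by nlinarith [hu.two_le]
  have hu2v : u ^ 2 ≠ v := fun h => Nat.Prime.not_prime_pow' (by norm_num) (h ▸ hv)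
  have hu2w : u ^ 2 ≠ w := fun h => Nat.Prime.not_prime_pow' (by norm_num) (h ▸ hw)
  have hD : ({u, u ^ 2, v, w} : Finset ℕ).card = 4 := by
    simp [Finset.card_insert_of_notMem, *]
  have := card_lt_ncard_ne_top_of_isPrimePow hv hw hvw ⟨u ^ 2 * w, by rw [h]; ring⟩
    ⟨u ^ 2 * v, by rw [h]; ring⟩ {u, u ^ 2, v, w} ?_
  · rwa [hD] at this
  simp only [Finset.mem_insert, Finset.mem_singleton]
  rintro d (hd | hd | hd | hd) <;> rw [hd]
  · exact ⟨hu.isPrimePow, v * w * u, by rw [h]; ring⟩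
  · exact ⟨hu.isPrimePow.pow two_ne_zero, v * w, by rw [h]; ring⟩
  · exact ⟨hv.isPrimePow, u ^ 2 * w, by rw [h]; ring⟩
  · exact ⟨hw.isPrimePow, u ^ 2 * v, by rw [h]; ring⟩

lemma five_le_ncard_ne_top_of_card_eq_sq_mul_sq {a b : ℕ} (ha : a.Prime) (hb : b.Prime)
    (hab : a ≠ b) (h : Nat.card K = a ^ 2 * b ^ 2) : 5 ≤ {H : Subgroup K | H ≠ ⊤}.ncard := by
  have haa : a ≠ a ^ 2 := by nlinarith [ha.two_le]
  have hbb : b ≠ b ^ 2 := by nlinarith [hb.two_le]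
  have ha2b : a ^ 2 ≠ b := fun h => Nat.Prime.not_prime_pow' (by norm_num) (h ▸ hb)
  have hab2 : a ≠ b ^ 2 := fun h => Nat.Prime.not_prime_pow' (by norm_num) (h ▸ ha)
  have ha2b2 : a ^ 2 ≠ b ^ 2 := (Nat.pow_left_injective two_ne_zero).ne hab
  have hD : ({a, a ^ 2, b, b ^ 2} : Finset ℕ).card = 4 := by
    simp [Finset.card_insert_of_notMem, *]
  have := card_lt_ncard_ne_top_of_isPrimePow ha hb hab ⟨a * b ^ 2, by rw [h]; ring⟩
    ⟨a ^ 2 * b, by rw [h]; ring⟩ {a, a ^ 2, b, b ^ 2} ?_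
  · rwa [hD] at this
  simp only [Finset.mem_insert, Finset.mem_singleton]
  rintro d (hd | hd | hd | hd) <;> rw [hd]
  · exact ⟨ha.isPrimePow, a * b ^ 2, by rw [h]; ring⟩
  · exact ⟨ha.isPrimePow.pow two_ne_zero, b ^ 2, h⟩
  · exact ⟨hb.isPrimePow, a ^ 2 * b, by rw [h]; ring⟩
  · exact ⟨hb.isPrimePow.pow two_ne_zero, a ^ 2, by rw [h]; ring⟩

lemma exists_card_eq_ne_dvd_card_of_card_eq_sq_mul {a b : ℕ} (ha : a.Prime) (hb : b.Prime)
    (hab : a ≠ b) (h : Nat.card K = a ^ 2 * b) :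
    ∃ B X : Subgroup K, Nat.card B = b ∧ b ∣ Nat.card X ∧ B ≠ X ∧ X ≠ ⊤ := by
  have := Fact.mk hb
  have hcardR (R : Sylow b K) : Nat.card R = b := by
    simpa using R.card_eq_pow_of_card_eq_pow_mul (k := 1) (m := a ^ 2)
      (fun hba => hab ((Nat.prime_dvd_prime_iff_eq hb ha).mp (hb.dvd_of_dvd_pow hba)).symm)
      (by rw [h]; ring)
  by_cases hsub : Subsingleton (Sylow b K)
  · let R : Sylow b K := default
    have := Sylow.normal_of_subsingleton R
    have hQ : Nat.card (K ⧸ (R : Subgroup K)) = a ^ 2 := by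
      have := Subgroup.card_eq_card_quotient_mul_card_subgroup (R : Subgroup K)
      rw [h, hcardR R] at this
      exact (Nat.eq_of_mul_eq_mul_right hb.pos this).symm
    have := Fact.mk ha
    obtain ⟨Y, hY⟩ := Sylow.exists_subgroup_card_pow_prime (G := K ⧸ (R : Subgroup K)) a (n := 1)
      (by rw [hQ]; exact pow_dvd_pow a one_le_two)
    obtain ⟨X, hRX, hX⟩ := Subgroup.exists_lt_lt_top_of_quotient (R : Subgroup K) (Y := Y)
      (fun hYb => ha.ne_one (by rw [← pow_one a, ← hY, hYb, Subgroup.card_bot]))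
      (fun hYt => by rw [hYt, Subgroup.card_top, hQ] at hY; nlinarith [ha.two_le])
    exact ⟨R, X, hcardR R, hcardR R ▸ Subgroup.card_dvd_of_le hRX.le, hRX.ne, hX.ne⟩
  · obtain ⟨R, R', hRR'⟩ := (not_subsingleton_iff_nontrivial.mp hsub).exists_pair_ne
    refine ⟨R', R, hcardR R', (hcardR R).symm ▸ dvd_rfl, fun h => hRR' (Sylow.ext h.symm), ?_⟩
    refine Subgroup.ne_top_of_not_dvd_card (p := a) ⟨a * b, by rw [h]; ring⟩ ?_
    rw [hcardR R]
    exact fun hab' => hab ((Nat.prime_dvd_prime_iff_eq ha hb).mp hab')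

lemma five_le_ncard_ne_top_of_card_eq_sq_mul {a b : ℕ} (ha : a.Prime) (hb : b.Prime)
    (hab : a ≠ b) (h : Nat.card K = a ^ 2 * b) : 5 ≤ {H : Subgroup K | H ≠ ⊤}.ncard := by
  obtain ⟨B, X, hB, hbX, hBX, hX⟩ := exists_card_eq_ne_dvd_card_of_card_eq_sq_mul ha hb hab h
  have hb_not_dvd (k : ℕ) : ¬ b ∣ a ^ k :=
    fun hba => hab ((Nat.prime_dvd_prime_iff_eq hb ha).mp (hb.dvd_of_dvd_pow hba)).symm
  have := Fact.mk ha
  have hpow (k : ℕ) (hk : k ≤ 2) : ∃ H : Subgroup K, H ≠ ⊤ ∧ H ≠ X ∧ Nat.card H = a ^ k := by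
    obtain ⟨H, hH⟩ := Sylow.exists_subgroup_card_pow_prime a (G := K) (n := k)
      (h ▸ (pow_dvd_pow a hk).mul_right b)
    refine ⟨H, Subgroup.ne_top_of_not_dvd_card (h ▸ dvd_mul_left b _) (hH ▸ hb_not_dvd k), ?_, hH⟩
    rintro rfl
    exact hb_not_dvd k (hH ▸ hbX)
  have hD : ({1, a, a ^ 2, b} : Finset ℕ).card = 4 := by
    have h1a : 1 ≠ a := ha.ne_one.symm
    have h1a2 : 1 ≠ a ^ 2 := (Nat.one_lt_pow two_ne_zero ha.one_lt).ne
    have h1b : 1 ≠ b := hb.ne_one.symm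
    have haa : a ≠ a ^ 2 := by nlinarith [ha.two_le]
    have ha2b : a ^ 2 ≠ b := fun h => Nat.Prime.not_prime_pow' (by norm_num) (h ▸ hb)
    simp [Finset.card_insert_of_notMem, *]
  have := card_add_one_le_ncard_ne_top {1, a, a ^ 2, b} hX ?_
  · rwa [hD] at this
  simp only [Finset.mem_insert, Finset.mem_singleton]
  rintro d (hd | hd | hd | hd) <;> rw [hd]
  · simpa using hpow 0 (by norm_num)
  · simpa using hpow 1 (by norm_num)
  · exact hpow 2 le_rfl
  · refine ⟨B, Subgroup.ne_top_of_not_dvd_card (p := a) (h ▸ ⟨a * b, by ring⟩) ?_, hBX, hB⟩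
    rw [hB]
    exact fun hab' => hab ((Nat.prime_dvd_prime_iff_eq ha hb).mp hab')

lemma five_le_ncard_ne_top_of_card_mul_pow_left_eq {p q r j : ℕ} (hp : p.Prime) (hq : q.Prime)
    (hr : r.Prime) (hpq : p ≠ q) (hpr : p ≠ r) (hqr : q ≠ r) (hj : j ≠ 0)
    (h : Nat.card K * p ^ j = p ^ 2 * q ^ 2 * r) : 5 ≤ {H : Subgroup K | H ≠ ⊤}.ncard := by
  have hcop : p.Coprime (q ^ 2 * r) :=
    ((Nat.coprime_primes hp hq).mpr hpq).pow_right 2 |>.mul_right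
      ((Nat.coprime_primes hp hr).mpr hpr)
  have hj2 : j ≤ 2 := hp.le_of_pow_dvd_pow_mul hcop (Dvd.intro_left _ (h.trans (mul_assoc _ _ _)))
  obtain rfl | rfl : j = 1 ∨ j = 2 := by omega
  · exact five_le_ncard_ne_top_of_card_eq_sq_mul_mul hq hp hr hpq.symm hqr hpr
      (Nat.eq_of_mul_eq_mul_right (pow_pos hp.pos 1) (h.trans (by ring)))
  · exact five_le_ncard_ne_top_of_card_eq_sq_mul hq hr hqr
      (Nat.eq_of_mul_eq_mul_right (pow_pos hp.pos 2) (h.trans (by ring)))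

lemma five_le_ncard_ne_top_of_card_mul_pow_right_eq {p q r j : ℕ} (hp : p.Prime) (hq : q.Prime)
    (hr : r.Prime) (hpq : p ≠ q) (hpr : p ≠ r) (hqr : q ≠ r) (hj : j ≠ 0)
    (h : Nat.card K * r ^ j = p ^ 2 * q ^ 2 * r) : 5 ≤ {H : Subgroup K | H ≠ ⊤}.ncard := by
  have hcop : r.Coprime (p ^ 2 * q ^ 2) :=
    ((Nat.coprime_primes hr hp).mpr hpr.symm).pow_right 2 |>.mul_right
      (((Nat.coprime_primes hr hq).mpr hqr.symm).pow_right 2)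
  have hj1 : j ≤ 1 := hr.le_of_pow_dvd_pow_mul hcop (Dvd.intro_left _ (h.trans (by ring)))
  obtain rfl : j = 1 := by omega
  exact five_le_ncard_ne_top_of_card_eq_sq_mul_sq hp hq hpq
    (Nat.eq_of_mul_eq_mul_right (pow_pos hr.pos 1) (h.trans (by ring)))

end Finite

lemma five_le_ncard_ne_top_quotient_of_isPGroup {G : Type*} [Group G] [Finite G] {p q r s : ℕ}
    (hp : p.Prime) (hq : q.Prime) (hr : r.Prime) (hpq : p ≠ q) (hpr : p ≠ r) (hqr : q ≠ r)
    (hs : s.Prime) (hcard : Nat.card G = p ^ 2 * q ^ 2 * r) (M : Subgroup G) [M.Normal]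
    (hM : IsPGroup s M) (hMb : M ≠ ⊥) : 5 ≤ {H : Subgroup (G ⧸ M) | H ≠ ⊤}.ncard := by
  have := Fact.mk hs
  obtain ⟨j, hj⟩ := IsPGroup.iff_card.mp hM
  have hj0 : j ≠ 0 := by
    rintro rfl
    exact hMb (Subgroup.card_eq_one.mp (hj.trans (pow_zero s)))
  have hquot : Nat.card (G ⧸ M) * s ^ j = p ^ 2 * q ^ 2 * r := by
    rw [← hcard, ← hj, ← Subgroup.card_eq_card_quotient_mul_card_subgroup]
  have hsG : s ∈ (p ^ 2 * q ^ 2 * r).primeFactors :=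
    Nat.mem_primeFactors.mpr ⟨hs, hquot ▸ (dvd_pow_self s hj0).mul_left _, hcard ▸ Nat.card_pos.ne'⟩
  obtain rfl | rfl | rfl : s = p ∨ s = q ∨ s = r := by
    simpa [Nat.primeFactors_mul, Nat.primeFactors_pow, hp.ne_zero, hq.ne_zero, hr.ne_zero,
      hp.primeFactors, hq.primeFactors, hr.primeFactors] using hsG
  · exact five_le_ncard_ne_top_of_card_mul_pow_left_eq hp hq hr hpq hpr hqr hj0 hquot
  · exact five_le_ncard_ne_top_of_card_mul_pow_left_eq hq hp hr hpq.symm hqr hpr hj0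
      (hquot.trans (by ring))
  · exact five_le_ncard_ne_top_of_card_mul_pow_right_eq hp hq hr hpq hpr hqr hj0 hquot

theorem intersectionGraph_has_K5_of_nonabelian_solvable_p2q2r_general
    (p q r : ℕ) (hp : p.Prime) (hq : q.Prime) (hr : r.Prime)
    (hpq : p ≠ q) (hpr : p ≠ r) (hqr : q ≠ r)
    (G : Type*) [Group G] [Group.IsSolvable G] (hcard : Nat.card G = p ^ 2 * q ^ 2 * r) :
    ∃ s, (interGraph G).IsNClique 5 s := by
  have hpG : p ∣ Nat.card G := ⟨p * q ^ 2 * r, by rw [hcard]; ring⟩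
  have : Finite G :=
    Nat.finite_of_card_ne_zero (by simp [hcard, hp.ne_zero, hq.ne_zero, hr.ne_zero])
  have : Nontrivial G := Finite.one_lt_card_iff_nontrivial.mp
    (hp.one_lt.trans_le (Nat.le_of_dvd Nat.card_pos hpG))
  obtain ⟨s, hs, M, hMn, hMb, hM⟩ := Group.IsSolvable.exists_normal_isPGroup_ne_bot (G := G)
  exact exists_isNClique_interGraph_of_le_ncard_quotient M hMb
    (five_le_ncard_ne_top_quotient_of_isPGroup hp hq hr hpq hpr hqr hs hcard M hM hMb)

theorem intersectionGraph_has_K5_of_nonabelian_solvable_p2q2r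
    (p q r : ℕ) (hp : p.Prime) (hq : q.Prime) (hr : r.Prime)
    (hpq : p ≠ q) (hpr : p ≠ r) (hqr : q ≠ r)
    (G : Type*) [Group G] [Group.IsSolvable G] (hcard : Nat.card G = p ^ 2 * q ^ 2 * r)
    (hna : ¬ ∀ a b : G, a * b = b * a) :
    ∃ s, (interGraph G).IsNClique 5 s :=
  intersectionGraph_has_K5_of_nonabelian_solvable_p2q2r_general p q r hp hq hr hpq hpr hqr G hcard
end

section
/- Let p, q, r be distinct primes, let α, β, δ ≥ 1 with α + β + δ ≥ 7, and let G be a non-abelian solvable group of order p^α · q^β · r^δ. Then the intersection graph of subgroups I(G) contains K_5 as a subgraph, i.e., I(G) has a clique on 5 vertices. -/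
/-!
A finite solvable group `G` has a chain of subgroups `1 = G₀ < G₁ < ⋯ < Gₙ = G` in which every
step has prime index, so `n = Ω(|G|)`: a maximal subgroup containing the derived subgroup is
normal with simple abelian quotient, hence has prime index, and one recurses into it. Here
`n = α + β + δ ≥ 7`, so `G₁, …, G₅` are nontrivial proper subgroups; they form a chain, and any
two members of a chain of nontrivial subgroups meet nontrivially.
-/

open SimpleGraph

open scoped ArithmeticFunction.Omega

section

variable {G : Type*} [Group G]

theorem interGraph_isClique_of_isChain {s : Set {H : Subgroup G // H ≠ ⊥ ∧ H ≠ ⊤}}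
    (hs : IsChain (· ≤ ·) s) : (interGraph G).IsClique s := by
  intro H hH K hK hne
  refine ⟨hne, ?_⟩
  rcases hs.total hH hK with h | h
  · rw [inf_eq_left.2 h]
    exact H.2.1
  · rw [inf_eq_right.2 h]
    exact K.2.1

theorem interGraph_exists_isNClique_of_ltSeries (s : LTSeries (Subgroup G)) {n : ℕ}
    (hn : n < s.length) : ∃ t, (interGraph G).IsNClique n t := by
  let f : Fin n → Fin (s.length + 1) := fun i => ⟨i + 1, by omega⟩
  have hf : StrictMono f := fun i j h => by rw [Fin.lt_def] at h ⊢; simpa [f] using h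
  have hbot (i : Fin n) : s (f i) ≠ ⊥ :=
    (bot_le.trans_lt (s.strictMono (show 0 < f i by rw [Fin.lt_def]; simp [f]))).ne'
  have htop (i : Fin n) : s (f i) ≠ ⊤ :=
    ((s.strictMono (show f i < Fin.last _ by rw [Fin.lt_def]; simp [f]; omega)).trans_le
      le_top).ne
  let v : Fin n → {H : Subgroup G // H ≠ ⊥ ∧ H ≠ ⊤} := fun i => ⟨s (f i), hbot i, htop i⟩
  have hv : StrictMono v := fun i j h => s.strictMono (hf h)
  refine ⟨Finset.univ.map ⟨v, hv.injective⟩, ?_, by simp⟩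
  rw [Finset.coe_map, Finset.coe_univ, Set.image_univ]
  exact interGraph_isClique_of_isChain hv.monotone.isChain_range

theorem Group.IsSolvable.exists_subgroup_index_prime [Finite G] [Group.IsSolvable G]
    [Nontrivial G] : ∃ M : Subgroup G, M.index.Prime := by
  obtain ⟨M, hM, hle⟩ := (eq_top_or_exists_le_coatom (commutator G)).resolve_left
    (Group.IsSolvable.commutator_lt_top_of_nontrivial G).ne
  have := Subgroup.Normal.of_commutator_le G hle
  have := Subgroup.Normal.quotient_commutative_iff_commutator_le.mpr hle
  have : IsSimpleOrder (Subgroup (G ⧸ M)) :=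
    (show Subgroup (G ⧸ M) ≃o Set.Ici M from QuotientGroup.comapMk'OrderIso M).isSimpleOrder_iff.mpr
      (Set.isSimpleOrder_Ici_iff_isCoatom.mpr hM)
  have : IsSimpleGroup (G ⧸ M) :=
    { toNontrivial := Subgroup.nontrivial_iff.mp inferInstance
      eq_bot_or_eq_top_of_normal := fun H _ => IsSimpleOrder.eq_bot_or_eq_top H }
  exact ⟨M, M.index_eq_card ▸ Group.is_simple_iff_prime_card.mp this⟩

theorem Group.IsSolvable.exists_ltSeries_length_eq_cardFactors [Finite G] [Group.IsSolvable G] :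
    ∃ s : LTSeries (Subgroup G), s.length = Ω (Nat.card G) := by
  induction h : Nat.card G using Nat.strong_induction_on generalizing G with
  | _ n ih =>
  subst h
  rcases subsingleton_or_nontrivial G with hG | hG
  · exact ⟨RelSeries.singleton _ ⊥, by simp [Nat.card_unique]⟩
  obtain ⟨M, hM⟩ := exists_subgroup_index_prime (G := G)
  have hcard : Nat.card M * M.index = Nat.card G := M.card_mul_index
  have hMpos : 0 < Nat.card M := Nat.card_pos
  obtain ⟨s, hs⟩ := ih _ (by nlinarith [hM.two_le]) (G := M) rfl
  have hMtop : M < ⊤ := lt_top_iff_ne_top.2 fun h => hM.ne_one (Subgroup.index_eq_one.2 h)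
  refine ⟨(s.map _ fun _ _ h => Subgroup.map_subtype_lt_map_subtype.2 h).snoc ⊤
    ((Subgroup.map_subtype_le _).trans_lt hMtop), ?_⟩
  rw [← hcard, ArithmeticFunction.cardFactors_mul hMpos.ne' hM.ne_zero,
    ArithmeticFunction.cardFactors_apply_prime hM, ← hs]
  rfl

end

theorem intersectionGraph_has_K5_of_nonabelian_solvable_three_primes_large_general
    (p q r α β δ : ℕ) (hp : p.Prime) (hq : q.Prime) (hr : r.Prime)
    (hsum : 7 ≤ α + β + δ)
    (G : Type*) [Group G] [Group.IsSolvable G]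
    (hcard : Nat.card G = p ^ α * q ^ β * r ^ δ) :
    ∃ s, (interGraph G).IsNClique 5 s := by
  have hp0 := pow_ne_zero α hp.ne_zero
  have hq0 := pow_ne_zero β hq.ne_zero
  have hr0 := pow_ne_zero δ hr.ne_zero
  have : Finite G := Nat.finite_of_card_ne_zero (hcard ▸ by positivity)
  have hΩ : Ω (Nat.card G) = α + β + δ := by
    rw [hcard, ArithmeticFunction.cardFactors_mul (mul_ne_zero hp0 hq0) hr0,
      ArithmeticFunction.cardFactors_mul hp0 hq0, ArithmeticFunction.cardFactors_apply_prime_pow hp,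
      ArithmeticFunction.cardFactors_apply_prime_pow hq,
      ArithmeticFunction.cardFactors_apply_prime_pow hr]
  obtain ⟨s, hs⟩ := Group.IsSolvable.exists_ltSeries_length_eq_cardFactors (G := G)
  exact interGraph_exists_isNClique_of_ltSeries s (by omega)

theorem intersectionGraph_has_K5_of_nonabelian_solvable_three_primes_large
    (p q r α β δ : ℕ) (hp : p.Prime) (hq : q.Prime) (hr : r.Prime)
    (hpq : p ≠ q) (hpr : p ≠ r) (hqr : q ≠ r)
    (hα : 1 ≤ α) (hβ : 1 ≤ β) (hδ : 1 ≤ δ) (hsum : 7 ≤ α + β + δ)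
    (G : Type*) [Group G] [Group.IsSolvable G]
    (hcard : Nat.card G = p ^ α * q ^ β * r ^ δ)
    (hna : ¬ ∀ a b : G, a * b = b * a) :
    ∃ s, (interGraph G).IsNClique 5 s :=
  intersectionGraph_has_K5_of_nonabelian_solvable_three_primes_large_general p q r α β δ hp hq hr
    hsum G hcard
end

section
/- Let n > 2 be a natural number. Then the intersection graph of subgroups of the dihedral group of order 4n contains K_5 as a subgraph, i.e., it has a clique on 5 vertices. -/
open SimpleGraph

open SimpleGraph DihedralGroup

namespace K5Aux

variable (n : ℕ)

lemma hnn : (n : ZMod (2*n)) + n = 0 := by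
  have : ((2*n : ℕ) : ZMod (2*n)) = 0 := ZMod.natCast_self _
  push_cast at this; linear_combination this

lemma hneg : -(n : ZMod (2*n)) = n := by
  rw [neg_eq_iff_add_eq_zero]; exact hnn n

/-- explicit subgroup {1, r n, sr i, sr (i+n)} of DihedralGroup (2*n) -/
def pairK (i : ZMod (2*n)) : Subgroup (DihedralGroup (2*n)) where
  carrier := {1, r (n : ZMod (2*n)), sr i, sr (i + (n : ZMod (2*n)))}
  one_mem' := by simp
  inv_mem' := by
    rintro a ha
    simp only [Set.mem_insert_iff, Set.mem_singleton_iff, one_def] at ha ⊢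
    have h1 : (r (n : ZMod (2*n)))⁻¹ = r (n : ZMod (2*n)) :=
      inv_eq_of_mul_eq_one_right (by rw [r_mul_r, hnn, ← one_def])
    have h2 : ∀ j : ZMod (2*n), (sr j)⁻¹ = sr j := fun j =>
      inv_eq_of_mul_eq_one_right (sr_mul_self j)
    rcases ha with h | h | h | h <;> subst h <;> simp [h1, h2, ← one_def]
  mul_mem' := by
    have hs : ∀ j : ZMod (2*n), j - n = j + n := fun j => by
      rw [sub_eq_add_neg, hneg]
    have h2 : ∀ j : ZMod (2*n), j + n + n = j := fun j => by
      rw [add_assoc, hnn, add_zero]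
    have h3 : ∀ j : ZMod (2*n), j - (j + n) = n := fun j => by
      rw [sub_add_eq_sub_sub, sub_self, zero_sub, hneg]
    rintro a b ha hb
    simp only [Set.mem_insert_iff, Set.mem_singleton_iff, one_def] at ha hb ⊢
    rcases ha with h | h | h | h <;> rcases hb with h' | h' | h' | h' <;> subst h <;> subst h' <;>
      simp [hs, h2, h3, hnn, add_sub_cancel_left, add_sub_cancel_right, sub_self]

def rotK : Subgroup (DihedralGroup (2*n)) where
  carrier := {x | ∃ j, x = r j}
  one_mem' := ⟨0, one_def⟩
  inv_mem' := by
    rintro a ⟨j, rfl⟩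
    exact ⟨-j, inv_eq_of_mul_eq_one_right (by rw [r_mul_r, add_neg_cancel, ← one_def])⟩
  mul_mem' := by rintro a b ⟨j, rfl⟩ ⟨k, rfl⟩; exact ⟨j + k, by simp⟩

def zK : Subgroup (DihedralGroup (2*n)) where
  carrier := {1, r (n : ZMod (2*n))}
  one_mem' := by simp
  inv_mem' := by
    rintro a ha
    simp only [Set.mem_insert_iff, Set.mem_singleton_iff, one_def] at ha ⊢
    have h1 : (r (n : ZMod (2*n)))⁻¹ = r (n : ZMod (2*n)) :=
      inv_eq_of_mul_eq_one_right (by rw [r_mul_r, hnn, ← one_def])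
    rcases ha with h | h <;> subst h <;> simp [h1, ← one_def]
  mul_mem' := by
    rintro a b ha hb
    simp only [Set.mem_insert_iff, Set.mem_singleton_iff, one_def] at ha hb ⊢
    rcases ha with h | h <;> rcases hb with h' | h' <;> subst h <;> subst h' <;>
      simp [hnn]

variable {n}

lemma cast_inj_of_lt {a b : ℕ} (ha : a < 2*n) (hb : b < 2*n) (h : a ≠ b) :
    (a : ZMod (2*n)) ≠ (b : ZMod (2*n)) := by
  intro he
  have : NeZero (2*n) := ⟨by omega⟩
  have h2 := congrArg ZMod.val he
  rw [ZMod.val_natCast_of_lt ha, ZMod.val_natCast_of_lt hb] at h2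
  exact h h2

end K5Aux

theorem intersectionGraph_dihedral_has_K5 (n : ℕ) (hn : 2 < n) :
    ∃ s, (interGraph (DihedralGroup (2 * n))).IsNClique 5 s := by
  classical
  open K5Aux DihedralGroup in
  -- basic arithmetic facts
  have hne_cast : ∀ {a b : ℕ}, a < 2*n → b < 2*n → a ≠ b →
      (a : ZMod (2*n)) ≠ (b : ZMod (2*n)) := fun ha hb h => cast_inj_of_lt ha hb h
  have hrn_ne_one : r (n : ZMod (2*n)) ≠ (1 : DihedralGroup (2*n)) := by
    rw [one_def]
    simp only [ne_eq, r.injEq]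
    exact_mod_cast hne_cast (by omega) (by omega) (by omega : n ≠ 0)
  -- membership characterizations
  have mem_pairK : ∀ (i : ZMod (2*n)) (x : DihedralGroup (2*n)),
      x ∈ pairK n i ↔ x = 1 ∨ x = r (n : ZMod (2*n)) ∨ x = sr i ∨ x = sr (i + (n : ZMod (2*n))) :=
    fun i x => Iff.rfl
  have mem_zK : ∀ x : DihedralGroup (2*n),
      x ∈ zK n ↔ x = 1 ∨ x = r (n : ZMod (2*n)) := fun x => Iff.rfl
  have mem_rotK : ∀ x : DihedralGroup (2*n), x ∈ rotK n ↔ ∃ j, x = r j := fun x => Iff.rfl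
  -- all five subgroups contain r n
  have hz : r (n : ZMod (2*n)) ∈ zK n := by rw [mem_zK]; right; rfl
  have hrot : r (n : ZMod (2*n)) ∈ rotK n := ⟨n, rfl⟩
  have hp : ∀ i, r (n : ZMod (2*n)) ∈ pairK n i := by
    intro i; rw [mem_pairK]; right; left; rfl
  -- nontriviality
  have hnb : ∀ H : Subgroup (DihedralGroup (2*n)), r (n : ZMod (2*n)) ∈ H → H ≠ ⊥ := by
    intro H hH hbot
    rw [hbot, Subgroup.mem_bot] at hH
    exact hrn_ne_one hH
  have hnt : ∀ (H : Subgroup (DihedralGroup (2*n))) (x : DihedralGroup (2*n)),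
      x ∉ H → H ≠ ⊤ := by
    intro H x hx htop
    exact hx (htop.symm ▸ Subgroup.mem_top x)
  -- non-memberships
  have sr_nin_zK : ∀ i : ZMod (2*n), sr i ∉ zK n := by
    intro i h; rw [mem_zK] at h
    rcases h with h | h <;> simp [one_def, -r_zero] at h
  have sr_nin_rotK : ∀ i : ZMod (2*n), sr i ∉ rotK n := by
    rintro i ⟨j, h⟩; simp at h
  have r1_nin_pairK : ∀ i : ZMod (2*n), r (1 : ZMod (2*n)) ∉ pairK n i := by
    intro i h; rw [mem_pairK] at h
    rcases h with h | h | h | h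
    · rw [one_def] at h; simp only [r.injEq] at h
      exact hne_cast (by omega) (by omega) (by omega : (1:ℕ) ≠ 0) (by exact_mod_cast h)
    · simp only [r.injEq] at h
      exact hne_cast (by omega) (by omega) (by omega : (1:ℕ) ≠ n) (by exact_mod_cast h)
    all_goals simp at h
  have r1_nin_zK : r (1 : ZMod (2*n)) ∉ zK n := by
    intro h; rw [mem_zK] at h
    rcases h with h | h
    · rw [one_def] at h; simp only [r.injEq] at h
      exact hne_cast (by omega) (by omega) (by omega : (1:ℕ) ≠ 0) (by exact_mod_cast h)
    · simp only [r.injEq] at h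
      exact hne_cast (by omega) (by omega) (by omega : (1:ℕ) ≠ n) (by exact_mod_cast h)
  -- sr a ∉ pairK b for suitable naturals
  have sr_nin_pairK : ∀ a b : ℕ, a < 3 → b < 3 → a ≠ b →
      sr (a : ZMod (2*n)) ∉ pairK n (b : ZMod (2*n)) := by
    intro a b ha hb hab h
    rw [mem_pairK] at h
    rcases h with h | h | h | h
    · rw [one_def] at h; simp [-r_zero] at h
    · simp at h
    · simp only [sr.injEq] at h
      exact hne_cast (by omega) (by omega) hab h
    · simp only [sr.injEq] at h
      have : ((a : ℕ) : ZMod (2*n)) = ((b + n : ℕ) : ZMod (2*n)) := by push_cast; exact h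
      exact hne_cast (by omega) (by omega) (by omega : a ≠ b + n) this
  -- distinctness of the five subgroups
  have d01 : zK n ≠ rotK n := by
    intro h; exact r1_nin_zK (h ▸ (⟨1, rfl⟩ : r (1:ZMod (2*n)) ∈ rotK n))
  have dz_p : ∀ i : ZMod (2*n), zK n ≠ pairK n i := by
    intro i h
    have : sr i ∈ pairK n i := by rw [mem_pairK]; right; right; left; rfl
    exact sr_nin_zK i (h ▸ this)
  have drot_p : ∀ i : ZMod (2*n), rotK n ≠ pairK n i := by
    intro i h
    have : sr i ∈ pairK n i := by rw [mem_pairK]; right; right; left; rfl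
    exact sr_nin_rotK i (h ▸ this)
  have dp_p : ∀ a b : ℕ, a < 3 → b < 3 → a ≠ b →
      pairK n (a : ZMod (2*n)) ≠ pairK n (b : ZMod (2*n)) := by
    intro a b ha hb hab h
    have : sr (a : ZMod (2*n)) ∈ pairK n (a : ZMod (2*n)) := by
      rw [mem_pairK]; right; right; left; rfl
    exact sr_nin_pairK a b ha hb hab (h ▸ this)
  -- the five vertices
  let v0 : {H : Subgroup (DihedralGroup (2*n)) // H ≠ ⊥ ∧ H ≠ ⊤} :=
    ⟨zK n, hnb _ hz, hnt _ _ (sr_nin_zK 0)⟩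
  let v1 : {H : Subgroup (DihedralGroup (2*n)) // H ≠ ⊥ ∧ H ≠ ⊤} :=
    ⟨rotK n, hnb _ hrot, hnt _ _ (sr_nin_rotK 0)⟩
  let w : ∀ _ : ℕ, {H : Subgroup (DihedralGroup (2*n)) // H ≠ ⊥ ∧ H ≠ ⊤} := fun a =>
    ⟨pairK n (a : ZMod (2*n)), hnb _ (hp _), hnt _ _ (r1_nin_pairK _)⟩
  have hmem : ∀ H : {H : Subgroup (DihedralGroup (2*n)) // H ≠ ⊥ ∧ H ≠ ⊤},
      H = v0 ∨ H = v1 ∨ H = w 0 ∨ H = w 1 ∨ H = w 2 → r (n : ZMod (2*n)) ∈ H.1 := by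
    rintro H (rfl | rfl | rfl | rfl | rfl)
    exacts [hz, hrot, hp _, hp _, hp _]
  refine ⟨{v0, v1, w 0, w 1, w 2}, ?_, ?_⟩
  · -- clique
    intro x hx y hy hxy
    simp only [Finset.coe_insert, Set.mem_insert_iff, Finset.coe_singleton,
      Set.mem_singleton_iff] at hx hy
    have hxm := hmem x hx
    have hym := hmem y hy
    refine ⟨hxy, ?_⟩
    intro hb
    have : r (n : ZMod (2*n)) ∈ x.1 ⊓ y.1 := Subgroup.mem_inf.2 ⟨hxm, hym⟩
    rw [hb, Subgroup.mem_bot] at this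
    exact hrn_ne_one this
  · -- cardinality
    have e01 : v0 ≠ v1 := fun h => d01 (congrArg Subtype.val h)
    have e0w : ∀ a : ℕ, v0 ≠ w a := fun a h => dz_p _ (congrArg Subtype.val h)
    have e1w : ∀ a : ℕ, v1 ≠ w a := fun a h => drot_p _ (congrArg Subtype.val h)
    have eww : ∀ a b : ℕ, a < 3 → b < 3 → a ≠ b → w a ≠ w b := fun a b ha hb hab h =>
      dp_p a b ha hb hab (congrArg Subtype.val h)
    rw [Finset.card_insert_of_notMem (by
        simp only [Finset.mem_insert, Finset.mem_singleton]
        push_neg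
        exact ⟨e01, e0w 0, e0w 1, e0w 2⟩),
      Finset.card_insert_of_notMem (by
        simp only [Finset.mem_insert, Finset.mem_singleton]
        push_neg
        exact ⟨e1w 0, e1w 1, e1w 2⟩),
      Finset.card_insert_of_notMem (by
        simp only [Finset.mem_insert, Finset.mem_singleton]
        push_neg
        exact ⟨eww 0 1 (by omega) (by omega) (by omega), eww 0 2 (by omega) (by omega) (by omega)⟩),
      Finset.card_insert_of_notMem (by
        simp only [Finset.mem_singleton]
        exact eww 1 2 (by omega) (by omega) (by omega)),
      Finset.card_singleton]
end

section
/- Let G be a finite group. Then the clique cover number of the intersection graph of subgroups I(G) — that is, the minimum number of cliques of I(G) needed to cover all vertices of I(G), which equals the chromatic number of the complement graph of I(G) — is equal to the number of proper subgroups of G of prime order. -/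
open SimpleGraph

/-!
Every nontrivial proper subgroup contains a subgroup of prime order (Cauchy), and two distinct
subgroups of prime order intersect trivially. Hence sending a vertex to a prime-order subgroup
inside it is a proper colouring of the complement of `I(G)` (two vertices with the same colour
meet in that colour), while the prime-order subgroups themselves form a clique of the complement.
-/

namespace Subgroup

variable {G : Type*} [Group G]

lemma ne_bot_of_card_prime {P : Subgroup G} (hP : (Nat.card P).Prime) : P ≠ ⊥ := by
  rintro rfl
  exact Nat.not_prime_one (card_bot (G := G) ▸ hP)

lemma exists_le_card_prime {H : Subgroup G} [Finite H] (hH : H ≠ ⊥) :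
    ∃ P ≤ H, (Nat.card P).Prime := by
  obtain ⟨p, hp, hdvd⟩ := Nat.exists_prime_and_dvd (mt card_eq_one.mp hH)
  have : Fact p.Prime := ⟨hp⟩
  obtain ⟨x, hx⟩ := exists_prime_orderOf_dvd_card' (G := H) p hdvd
  refine ⟨zpowers (x : G), zpowers_le.mpr x.2, ?_⟩
  rwa [Nat.card_zpowers, orderOf_coe, hx]

lemma eq_of_le_of_card_prime {K P : Subgroup G} (hP : (Nat.card P).Prime) (hle : K ≤ P)
    (hK : K ≠ ⊥) : K = P := by
  have : Finite P := Nat.finite_of_card_ne_zero hP.ne_zero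
  rcases hP.eq_one_or_self_of_dvd _ (card_dvd_of_le hle) with h | h
  · exact absurd (card_eq_one.mp h) hK
  · exact eq_of_le_of_card_ge hle h.ge

lemma inf_eq_bot_of_card_prime {P Q : Subgroup G} (hP : (Nat.card P).Prime)
    (hQ : (Nat.card Q).Prime) (hne : P ≠ Q) : P ⊓ Q = ⊥ := by
  by_contra h
  exact hne ((eq_of_le_of_card_prime hP inf_le_left h).symm.trans
    (eq_of_le_of_card_prime hQ inf_le_right h))

end Subgroup

lemma interGraph_compl_adj {G : Type*} [Group G] {H K : {H : Subgroup G // H ≠ ⊥ ∧ H ≠ ⊤}} :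
    (interGraph G)ᶜ.Adj H K ↔ H ≠ K ∧ H.1 ⊓ K.1 = ⊥ := by
  simp only [compl_adj, interGraph, not_and, not_not]
  exact ⟨fun h => ⟨h.1, h.2 h.1⟩, fun h => ⟨h.1, fun _ => h.2⟩⟩

abbrev PrimeOrderProperSubgroup (G : Type*) [Group G] :=
  {H : Subgroup G // H ≠ ⊤ ∧ ∃ p : ℕ, p.Prime ∧ Nat.card H = p}

namespace PrimeOrderProperSubgroup

variable {G : Type*} [Group G]

lemma card_prime (P : PrimeOrderProperSubgroup G) : (Nat.card P.1).Prime := by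
  obtain ⟨p, hp, hP⟩ := P.2.2
  exact hP ▸ hp

lemma exists_le [Finite G] (H : {H : Subgroup G // H ≠ ⊥ ∧ H ≠ ⊤}) :
    ∃ P : PrimeOrderProperSubgroup G, P.1 ≤ H.1 := by
  obtain ⟨P, hle, hP⟩ := Subgroup.exists_le_card_prime H.2.1
  exact ⟨⟨P, fun h => H.2.2 (top_le_iff.mp (h ▸ hle)), _, hP, rfl⟩, hle⟩

noncomputable def complInterGraphColoring [Finite G] :
    (interGraph G)ᶜ.Coloring (PrimeOrderProperSubgroup G) :=
  Coloring.mk (fun H => (exists_le H).choose) fun {H K} hadj hcol => by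
    have hle : (exists_le H).choose.1 ≤ H.1 ⊓ K.1 :=
      le_inf (exists_le H).choose_spec (hcol ▸ (exists_le K).choose_spec)
    rw [(interGraph_compl_adj.mp hadj).2, le_bot_iff] at hle
    exact Subgroup.ne_bot_of_card_prime (card_prime _) hle

def toVertex (P : PrimeOrderProperSubgroup G) : {H : Subgroup G // H ≠ ⊥ ∧ H ≠ ⊤} :=
  ⟨P.1, Subgroup.ne_bot_of_card_prime P.card_prime, P.2.1⟩

lemma toVertex_injective : Function.Injective (toVertex (G := G)) :=
  fun _ _ h => Subtype.ext (Subtype.mk.inj h)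

def toComplInterGraph : (⊤ : SimpleGraph (PrimeOrderProperSubgroup G)) ↪g (interGraph G)ᶜ where
  toFun := toVertex
  inj' := toVertex_injective
  map_rel_iff' {P Q} := by
    change (interGraph G)ᶜ.Adj (toVertex P) (toVertex Q) ↔ _
    rw [interGraph_compl_adj, top_adj, toVertex_injective.ne_iff]
    exact ⟨And.left, fun h => ⟨h, Subgroup.inf_eq_bot_of_card_prime P.card_prime Q.card_prime
      fun e => h (Subtype.ext e)⟩⟩

end PrimeOrderProperSubgroup

theorem cliqueCoverNumber_intersectionGraph (G : Type*) [Group G] [Finite G] :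
    (interGraph G)ᶜ.chromaticNumber =
      (Nat.card {H : Subgroup G // H ≠ ⊤ ∧ ∃ p : ℕ, p.Prime ∧ Nat.card H = p} : ℕ∞) := by
  rw [← ENat.card_eq_coe_natCard, ← chromaticNumber_top_eq_enat_card]
  exact le_antisymm
    (chromaticNumber_mono_of_hom PrimeOrderProperSubgroup.complInterGraphColoring)
    (chromaticNumber_mono_of_hom PrimeOrderProperSubgroup.toComplInterGraph.toHom)
end

section
/- Let G be a finite group. Then the intersection graph of subgroups I(G) is weakly α-perfect: the independence number of I(G) (the maximum size of a set of pairwise non-adjacent vertices) equals the clique cover number of I(G) (the minimum number of cliques needed to cover all vertices, which equals the chromatic number of the complement of I(G)). -/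
open SimpleGraph

/-! The minimal nontrivial subgroups pairwise intersect trivially, so they form a clique of the
complement of `I(G)`; colouring each vertex by a minimal subgroup it contains is a proper colouring
of that complement with exactly as many colours. Hence its clique and chromatic numbers agree. -/

namespace SimpleGraph

variable {V : Type*} {Γ : SimpleGraph V}

theorem cliqueNum_eq_chromaticNumber_of_coloring_by_clique [Finite V] {s : Set V}
    (hs : Γ.IsClique s) (C : Γ.Coloring s) : (Γ.cliqueNum : ℕ∞) = Γ.chromaticNumber := by
  have := Fintype.ofFinite V
  classical
  refine le_antisymm Γ.cliqueNum_le_chromaticNumber ?_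
  calc Γ.chromaticNumber ≤ Fintype.card s := C.colorable.chromaticNumber_le
    _ = s.toFinset.card := by rw [Set.toFinset_card]
    _ ≤ Γ.cliqueNum := by
      have hs' : Γ.IsClique (s.toFinset : Set V) := by rwa [Set.coe_toFinset]
      exact_mod_cast hs'.card_le_cliqueNum

end SimpleGraph

section Atoms

variable {G : Type*} [Group G]

theorem compl_interGraph_adj {H K : {H : Subgroup G // H ≠ ⊥ ∧ H ≠ ⊤}} :
    (interGraph G)ᶜ.Adj H K ↔ H ≠ K ∧ Disjoint H.1 K.1 := by
  simp only [compl_adj, interGraph, disjoint_iff]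
  tauto

variable (G) in
def atomVertices : Set {H : Subgroup G // H ≠ ⊥ ∧ H ≠ ⊤} := {A | IsAtom A.1}

theorem isClique_compl_interGraph_atomVertices :
    (interGraph G)ᶜ.IsClique (atomVertices G) := fun _ hA _ hB hAB =>
  compl_interGraph_adj.mpr ⟨hAB, hA.disjoint_of_ne hB (Subtype.coe_ne_coe.mpr hAB)⟩

theorem exists_mem_atomVertices_le [IsAtomic (Subgroup G)]
    (H : {H : Subgroup G // H ≠ ⊥ ∧ H ≠ ⊤}) : ∃ A : {H : Subgroup G // H ≠ ⊥ ∧ H ≠ ⊤},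
      A ∈ atomVertices G ∧ A.1 ≤ H.1 := by
  obtain ⟨a, ha, haH⟩ := (eq_bot_or_exists_atom_le H.1).resolve_left H.2.1
  exact ⟨⟨a, ha.1, (haH.trans_lt (lt_top_iff_ne_top.mpr H.2.2)).ne⟩, ha, haH⟩

variable [IsAtomic (Subgroup G)]

noncomputable def atomBelow (H : {H : Subgroup G // H ≠ ⊥ ∧ H ≠ ⊤}) : atomVertices G :=
  ⟨_, (exists_mem_atomVertices_le H).choose_spec.1⟩

theorem atomBelow_le (H : {H : Subgroup G // H ≠ ⊥ ∧ H ≠ ⊤}) : (atomBelow H).1.1 ≤ H.1 :=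
  (exists_mem_atomVertices_le H).choose_spec.2

noncomputable def atomColoring : (interGraph G)ᶜ.Coloring (atomVertices G) :=
  Coloring.mk atomBelow fun {H K} hHK hHK' =>
    (atomBelow H).1.2.1 <| le_bot_iff.mp <|
      (compl_interGraph_adj.mp hHK).2 (atomBelow_le H) (hHK' ▸ atomBelow_le K)

end Atoms

theorem intersectionGraph_weakly_alpha_perfect (G : Type*) [Group G] [Finite G] :
    ((interGraph G)ᶜ.cliqueNum : ℕ∞) = (interGraph G)ᶜ.chromaticNumber :=
  cliqueNum_eq_chromaticNumber_of_coloring_by_clique isClique_compl_interGraph_atomVertices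
    atomColoring
end

section
/- Let G be a finite group. Then the girth of the intersection graph of subgroups I(G) is either 3 or infinity; that is, either I(G) contains a triangle (a 3-clique) or I(G) is acyclic (contains no cycle at all). -/
/-!
If `I(G)` contains a triangle, its girth is 3. Otherwise any two adjacent subgroups `H`, `K`
are comparable, since `H ⊓ K` would complete them to a triangle, and each subgroup `H` lies
below at most one of its neighbours, since two such neighbours both contain `H` and so are
adjacent. Orienting every edge upwards, the smallest subgroup on a cycle would lie below both
of its neighbours on the cycle; hence there is no cycle.
-/

open SimpleGraph

namespace SimpleGraph

variable {V : Type*} {G : SimpleGraph V}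

theorem egirth_le_three_of_not_cliqueFree_three (h : ¬ G.CliqueFree 3) : G.egirth ≤ 3 := by
  classical
  obtain ⟨s, hs⟩ : ∃ s, G.IsNClique 3 s := by simpa [CliqueFree] using h
  obtain ⟨x, y, z, hxy, hxz, hyz, -⟩ := is3Clique_iff.mp hs
  let w : G.Walk x x := .cons hxy <| .cons hyz <| .cons hxz.symm .nil
  have hw : w.IsCycle := by
    simp [w, Walk.isCycle_def, hxy.ne, hyz.ne, hxz.ne, hxy.ne', hxz.ne']
  exact egirth_le_length hw

theorem egirth_eq_three_of_not_cliqueFree_three (h : ¬ G.CliqueFree 3) : G.egirth = 3 :=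
  le_antisymm (egirth_le_three_of_not_cliqueFree_three h) three_le_egirth

/-- The least vertex of a cycle would have two neighbours above it. -/
theorem isAcyclic_of_adj_comparable [PartialOrder V]
    (hcomp : ∀ ⦃u v⦄, G.Adj u v → u ≤ v ∨ v ≤ u)
    (hup : ∀ ⦃u v w⦄, G.Adj u v → G.Adj u w → u ≤ v → u ≤ w → v = w) : G.IsAcyclic := by
  classical
  intro a c hc
  obtain ⟨u, hu⟩ := c.support.toFinset.exists_minimal ⟨a, by simp⟩
  have hu_mem : u ∈ c.support := by simpa using hu.prop
  let c' := c.rotate u hu_mem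
  have hc' : c'.IsCycle := hc.rotate hu_mem
  have above : ∀ ⦃v⦄, v ∈ c'.support → G.Adj u v → u ≤ v := fun v hv huv =>
    (hcomp huv).elim id fun hvu => hu.2 (by simpa [c'] using hv) hvu
  have hsnd := c'.adj_snd hc'.not_nil
  have hpen := (c'.adj_penultimate hc'.not_nil).symm
  exact hc'.snd_ne_penultimate <| hup hsnd hpen
    (above (c'.getVert_mem_support _) hsnd) (above (c'.getVert_mem_support _) hpen)

end SimpleGraph

namespace interGraph

variable {G : Type*} [Group G]

theorem adj_of_le {H K : {H : Subgroup G // H ≠ ⊥ ∧ H ≠ ⊤}} (hne : H ≠ K) (hle : H ≤ K) :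
    (interGraph G).Adj H K :=
  ⟨hne, by rw [inf_eq_left.mpr hle]; exact H.2.1⟩

/-- Otherwise `H ⊓ K` would complete `H` and `K` to a triangle. -/
theorem le_or_le_of_adj (h3 : (interGraph G).CliqueFree 3)
    {H K : {H : Subgroup G // H ≠ ⊥ ∧ H ≠ ⊤}} (hHK : (interGraph G).Adj H K) :
    H ≤ K ∨ K ≤ H := by
  by_contra! hcon
  let L : {H : Subgroup G // H ≠ ⊥ ∧ H ≠ ⊤} :=
    ⟨H.1 ⊓ K.1, hHK.2, ne_top_of_le_ne_top H.2.2 inf_le_left⟩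
  have hLH : L ≤ H := Subtype.coe_le_coe.mp inf_le_left
  have hLK : L ≤ K := Subtype.coe_le_coe.mp inf_le_right
  have hadjH : (interGraph G).Adj L H := adj_of_le (fun h => hcon.1 (h ▸ hLK)) hLH
  have hadjK : (interGraph G).Adj L K := adj_of_le (fun h => hcon.2 (h ▸ hLH)) hLK
  classical
  exact h3 {H, K, L} (is3Clique_triple_iff.mpr ⟨hHK, hadjH.symm, hadjK.symm⟩)

theorem eq_of_adj_of_le_of_le (h3 : (interGraph G).CliqueFree 3)
    {H K₁ K₂ : {H : Subgroup G // H ≠ ⊥ ∧ H ≠ ⊤}} (h₁ : (interGraph G).Adj H K₁)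
    (h₂ : (interGraph G).Adj H K₂) (hle₁ : H ≤ K₁) (hle₂ : H ≤ K₂) : K₁ = K₂ := by
  by_contra hne
  have hK : (interGraph G).Adj K₁ K₂ := ⟨hne, ne_bot_of_le_ne_bot H.2.1 (le_inf hle₁ hle₂)⟩
  classical
  exact h3 {H, K₁, K₂} (is3Clique_triple_iff.mpr ⟨h₁, h₂, hK⟩)

theorem isAcyclic_of_cliqueFree_three (h3 : (interGraph G).CliqueFree 3) :
    (interGraph G).IsAcyclic :=
  isAcyclic_of_adj_comparable (fun _ _ => le_or_le_of_adj h3)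
    (fun _ _ _ => eq_of_adj_of_le_of_le h3)

end interGraph

theorem intersectionGraph_egirth_eq_three_or_top_general (G : Type*) [Group G] :
    (interGraph G).egirth = 3 ∨ (interGraph G).egirth = ⊤ := by
  by_cases h3 : (interGraph G).CliqueFree 3
  · exact .inr (interGraph.isAcyclic_of_cliqueFree_three h3).egirth_eq_top
  · exact .inl (egirth_eq_three_of_not_cliqueFree_three h3)

theorem intersectionGraph_egirth_eq_three_or_top (G : Type*) [Group G] [Finite G] :
    (interGraph G).egirth = 3 ∨ (interGraph G).egirth = ⊤ :=
  intersectionGraph_egirth_eq_three_or_top_general G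
end
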